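/- arXiv:2004.13758 — 10 statements merged into one kernel-verified Lean document; each statement's English description precedes it below -/
import Mathlib

section
/- Assume |V| ≥ 3. Then the route-design polytope P^RDP (the convex hull of S) equals the set of points (x, y, y′, w) in (V → ℝ) × ℝ × ℝ × ℝ satisfying the linear system: ∑_{v∈V} x_v ≥ 2·y′; x_v ≤ y for every v ∈ V; y ≥ y′; w − ∑_{v∈V} x_v + y ≤ 0; ∑_{v∈V} x_v ≥ y + y′; 0 ≤ x_v ≤ 1 for every v ∈ V; 0 ≤ y ≤ 1; 0 ≤ y′ ≤ 1; and w ≥ 0. -/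
/-!
The relaxation is a convex set containing `S`, so the point is that it has no fractional
vertices. Scaling by `y` moves any point with `y > 0` to the face `y = 1`, and the only point
with `y = 0` is the origin. On that face, write `w = t (∑ x - 1)` with `t ∈ [0, 1]` and
`z = 1 - y'`: the remaining constraints say that `(x, z) ∈ [0, 1]^(V ⊕ 1)` has coordinate sum
at least `2`, and the affine map back sends the 0/1 points of that set into `S`.

By Krein–Milman, `{u ∈ [0, 1]^ι | k ≤ ∑ u}` with `k ∈ ℕ` is the convex hull of its 0/1 points.
At an extreme point, two fractional coordinates could be shifted against each other. A single
fractional coordinate would make the sum fractional, hence strictly above `k`, so that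
coordinate could be moved on its own.
-/

open Set

/-- The set `S` of integral feasible points `(x, y, y′, w)` of the route-design problem on an edge:
`x v ∈ {0,1}`, `y ∈ {0,1}`, `y′ ∈ {0,1}`, `w ≥ 0`, `∑ x v ≥ 2 y′`, `w − ∑ x v + y ≤ 0`,
`x v ≤ y` for all `v`, and `y′ ≤ y`.  Its convex hull is the polytope `P^RDP`. -/
def RDPset (V : Type*) [Fintype V] : Set ((V → ℝ) × ℝ × ℝ × ℝ) :=
  {p | (∀ v, p.1 v = 0 ∨ p.1 v = 1) ∧ (p.2.1 = 0 ∨ p.2.1 = 1) ∧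
       (p.2.2.1 = 0 ∨ p.2.2.1 = 1) ∧ 0 ≤ p.2.2.2 ∧
       2 * p.2.2.1 ≤ ∑ v, p.1 v ∧
       p.2.2.2 - (∑ v, p.1 v) + p.2.1 ≤ 0 ∧
       (∀ v, p.1 v ≤ p.2.1) ∧ p.2.2.1 ≤ p.2.1}

section ExtremePoints

variable {E : Type*} [AddCommGroup E] [Module ℝ E]

lemma eq_zero_of_add_mem_of_sub_mem {A : Set E} {x d : E} (hx : x ∈ A.extremePoints ℝ)
    (hadd : x + d ∈ A) (hsub : x - d ∈ A) : d = 0 := by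
  simpa using hx.2 hadd hsub (mem_openSegment_add_sub x d)

variable [TopologicalSpace E] [IsTopologicalAddGroup E] [ContinuousSMul ℝ E]
  [LocallyConvexSpace ℝ E] [T2Space E]

lemma subset_convexHull_inter_of_extremePoints_subset {A F : Set E} (hA : IsCompact A)
    (hAc : Convex ℝ A) (hF : F.Finite) (hext : A.extremePoints ℝ ⊆ F) :
    A ⊆ convexHull ℝ (A ∩ F) :=
  calc A = closure (convexHull ℝ (A.extremePoints ℝ)) :=
        (closure_convexHull_extremePoints hA hAc).symm
    _ ⊆ closure (convexHull ℝ (A ∩ F)) :=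
        closure_mono (convexHull_mono (subset_inter extremePoints_subset hext))
    _ = convexHull ℝ (A ∩ F) := (hF.inter_of_right A).isClosed_convexHull (𝕜 := ℝ) |>.closure_eq

end ExtremePoints

section ZeroOne

variable {ι : Type*}

def zeroOneVectors (ι : Type*) : Set (ι → ℝ) :=
  univ.pi fun _ => {0, 1}

lemma min_pos_of_not_zero_or_one {t : ℝ} (ht : t ∈ Icc 0 1) (h : ¬(t = 0 ∨ t = 1)) :
    0 < min t (1 - t) := by
  push Not at h
  exact lt_min (ht.1.lt_of_ne' h.1) (sub_pos.2 (ht.2.lt_of_ne h.2))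

lemma add_mem_pi_Icc_of_abs_le {u d : ι → ℝ} (hd : ∀ i, |d i| ≤ min (u i) (1 - u i)) :
    u + d ∈ univ.pi fun _ => Icc 0 1 := by
  intro i _
  have := abs_le.1 ((hd i).trans (min_le_left _ _))
  have := abs_le.1 ((hd i).trans (min_le_right _ _))
  exact ⟨by simp only [Pi.add_apply]; linarith, by simp only [Pi.add_apply]; linarith⟩

lemma abs_single_le_min [DecidableEq ι] {u : ι → ℝ} (hu : u ∈ univ.pi fun _ => Icc 0 1) {i : ι}
    {δ : ℝ} (hδ : |δ| ≤ min (u i) (1 - u i)) (l : ι) :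
    |(Pi.single i δ : ι → ℝ) l| ≤ min (u l) (1 - u l) := by
  rcases eq_or_ne l i with rfl | hli
  · simpa using hδ
  · simpa [hli] using ⟨(hu l (mem_univ l)).1, (hu l (mem_univ l)).2⟩

lemma exists_natCast_sum_eq {s : Finset ι} {u : ι → ℝ} (hu : ∀ i ∈ s, u i = 0 ∨ u i = 1) :
    ∃ n : ℕ, ∑ i ∈ s, u i = n := by
  classical
  refine ⟨(s.filter fun i => u i = 1).card, ?_⟩
  rw [Finset.natCast_card_filter]
  refine Finset.sum_congr rfl fun i hi => ?_
  rcases hu i hi with h | h <;> simp [h]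

end ZeroOne

def cubeSumGe (ι : Type*) [Fintype ι] (k : ℝ) : Set (ι → ℝ) :=
  univ.pi (fun _ => Icc 0 1) ∩ {u | k ≤ ∑ i, u i}

namespace cubeSumGe

variable {ι : Type*} [Fintype ι]

lemma isCompact (k : ℝ) : IsCompact (cubeSumGe ι k) :=
  (isCompact_univ_pi fun _ => isCompact_Icc).inter_right
    (isClosed_le continuous_const (continuous_finsetSum _ fun i _ => continuous_apply i))

lemma convex (k : ℝ) : Convex ℝ (cubeSumGe ι k) :=
  (convex_pi fun _ _ => convex_Icc 0 1).inter <| convex_halfSpace_ge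
    ⟨fun u v => Finset.sum_add_distrib, fun c u => by simp [Finset.mul_sum]⟩ k

variable {k : ℝ} {u : ι → ℝ}

lemma eq_zero_of_mem_extremePoints {d : ι → ℝ} (hu : u ∈ (cubeSumGe ι k).extremePoints ℝ)
    (hd : ∀ i, |d i| ≤ min (u i) (1 - u i)) (hsum : |∑ i, d i| ≤ ∑ i, u i - k) : d = 0 := by
  have hsum' := abs_le.1 hsum
  refine eq_zero_of_add_mem_of_sub_mem hu ⟨add_mem_pi_Icc_of_abs_le hd, ?_⟩ ⟨?_, ?_⟩
  · simp only [mem_ofPred_eq, Pi.add_apply, Finset.sum_add_distrib]; linarith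
  · rw [sub_eq_add_neg]; exact add_mem_pi_Icc_of_abs_le fun i => by simpa using hd i
  · simp only [mem_ofPred_eq, Pi.sub_apply, Finset.sum_sub_distrib]; linarith

lemma zero_or_one_of_ne_of_mem_extremePoints (hu : u ∈ (cubeSumGe ι k).extremePoints ℝ)
    {i j : ι} (hi : ¬(u i = 0 ∨ u i = 1)) (hji : j ≠ i) : u j = 0 ∨ u j = 1 := by
  classical
  have hcube : ∀ l, u l ∈ Icc 0 1 := fun l => hu.1.1 l (mem_univ l)
  have hsum : k ≤ ∑ l, u l := hu.1.2
  by_contra hj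
  set δ := min (min (u i) (1 - u i)) (min (u j) (1 - u j))
  have hδ : 0 < δ :=
    lt_min (min_pos_of_not_zero_or_one (hcube i) hi) (min_pos_of_not_zero_or_one (hcube j) hj)
  have hd := eq_zero_of_mem_extremePoints (d := Pi.single i δ - Pi.single j δ) hu
    (fun l => by
      rcases eq_or_ne l j with rfl | hlj
      · rw [Pi.sub_apply, Pi.single_eq_of_ne hji, Pi.single_eq_same, zero_sub, abs_neg,
          abs_of_pos hδ]
        exact min_le_right _ _
      · rw [Pi.sub_apply, Pi.single_eq_of_ne hlj, sub_zero]
        exact abs_single_le_min hu.1.1 ((abs_of_pos hδ).trans_le (min_le_left _ _)) l)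
    (by simpa using hsum)
  simpa [hji.symm, hδ.ne'] using congrFun hd i

theorem extremePoints_subset_zeroOneVectors (k : ℕ) :
    (cubeSumGe ι k).extremePoints ℝ ⊆ zeroOneVectors ι := by
  classical
  intro u hu
  by_contra hnot
  obtain ⟨i, hi⟩ : ∃ i, ¬(u i = 0 ∨ u i = 1) := by
    simpa [zeroOneVectors, Set.mem_pi] using hnot
  have hcube : ∀ j, u j ∈ Icc 0 1 := fun j => hu.1.1 j (mem_univ j)
  have hsum : (k : ℝ) ≤ ∑ j, u j := hu.1.2
  have hδ := min_pos_of_not_zero_or_one (hcube i) hi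
  obtain ⟨n, hn⟩ := exists_natCast_sum_eq fun j hj =>
    zero_or_one_of_ne_of_mem_extremePoints hu hi (Finset.ne_of_mem_erase hj)
  have hsplit : ∑ j, u j = u i + n := by rw [← Finset.add_sum_erase _ _ (Finset.mem_univ i), hn]
  have hkn : (k : ℝ) ≤ n := by
    have : (k : ℝ) < n + 1 := by
      have := (hcube i).2.lt_of_ne (by tauto)
      linarith
    exact_mod_cast Nat.lt_succ_iff.1 (by exact_mod_cast this)
  have hd := eq_zero_of_mem_extremePoints (d := Pi.single i (min (u i) (1 - u i))) hu
    (abs_single_le_min hu.1.1 (abs_of_pos hδ).le)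
    (by simp only [Finset.sum_pi_single', if_pos (Finset.mem_univ i), abs_of_pos hδ]
        linarith [min_le_left (u i) (1 - u i)])
  simpa [hδ.ne'] using congrFun hd i

theorem subset_convexHull_zeroOneVectors (k : ℕ) :
    cubeSumGe ι k ⊆ convexHull ℝ (cubeSumGe ι k ∩ zeroOneVectors ι) :=
  subset_convexHull_inter_of_extremePoints_subset (isCompact k) (convex k)
    (Set.Finite.pi fun _ => toFinite _) (extremePoints_subset_zeroOneVectors k)

end cubeSumGe

def RDPrelaxation (V : Type*) [Fintype V] : Set ((V → ℝ) × ℝ × ℝ × ℝ) :=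
  {p : (V → ℝ) × ℝ × ℝ × ℝ |
        2 * p.2.2.1 ≤ ∑ v, p.1 v ∧
        (∀ v, p.1 v ≤ p.2.1) ∧
        p.2.2.1 ≤ p.2.1 ∧
        p.2.2.2 - (∑ v, p.1 v) + p.2.1 ≤ 0 ∧
        p.2.1 + p.2.2.1 ≤ ∑ v, p.1 v ∧
        (∀ v, 0 ≤ p.1 v ∧ p.1 v ≤ 1) ∧
        (0 ≤ p.2.1 ∧ p.2.1 ≤ 1) ∧
        (0 ≤ p.2.2.1 ∧ p.2.2.1 ≤ 1) ∧
        0 ≤ p.2.2.2}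

lemma convex_RDPrelaxation {V : Type*} [Fintype V] : Convex ℝ (RDPrelaxation V) := by
  rintro ⟨x, y, y', w⟩ ⟨p1, p2, p3, p4, p5, p6, ⟨p7, p7'⟩, ⟨p8, p8'⟩, p9⟩
    ⟨x₁, y₁, y'₁, w₁⟩ ⟨q1, q2, q3, q4, q5, q6, ⟨q7, q7'⟩, ⟨q8, q8'⟩, q9⟩ a b ha hb hab
  have comb : ∀ {s t s' t' : ℝ}, s ≤ t → s' ≤ t' → a * s + b * s' ≤ a * t + b * t' :=
    fun h h' => add_le_add (mul_le_mul_of_nonneg_left h ha) (mul_le_mul_of_nonneg_left h' hb)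
  simp only [RDPrelaxation, mem_ofPred_eq, Prod.smul_mk, Prod.mk_add_mk, Pi.add_apply,
    Pi.smul_apply, smul_eq_mul, Finset.sum_add_distrib, ← Finset.mul_sum]
  refine ⟨?_, fun v => ?_, ?_, ?_, ?_, fun v => ⟨?_, ?_⟩, ⟨?_, ?_⟩, ⟨?_, ?_⟩, ?_⟩
  · linarith [comb p1 q1]
  · linarith [comb (p2 v) (q2 v)]
  · linarith [comb p3 q3]
  · linarith [comb p4 q4]
  · linarith [comb p5 q5]
  · linarith [comb (p6 v).1 (q6 v).1]
  · linarith [comb (p6 v).2 (q6 v).2]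
  · linarith [comb p7 q7]
  · linarith [comb p7' q7']
  · linarith [comb p8 q8]
  · linarith [comb p8' q8']
  · linarith [comb p9 q9]

namespace RDPset

variable {V : Type*} [Fintype V]

lemma zero_mem : (0 : (V → ℝ) × ℝ × ℝ × ℝ) ∈ RDPset V :=
  ⟨fun _ => Or.inl rfl, Or.inl rfl, Or.inl rfl, le_rfl, by simp, by simp, fun _ => le_rfl, le_rfl⟩

lemma subset_RDPrelaxation : RDPset V ⊆ RDPrelaxation V := by
  rintro ⟨x, y, y', w⟩ ⟨hx, hy, hy', hw, h2y', hwy, hxy, hy'y⟩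
  have hy01 : 0 ≤ y ∧ y ≤ 1 := by rcases hy with rfl | rfl <;> norm_num
  refine ⟨h2y', hxy, hy'y, hwy, ?_, fun v => ?_, hy01, ?_, hw⟩
  · rcases hy' with rfl | rfl <;> linarith
  · rcases hx v with h | h <;> rw [h] <;> norm_num
  · rcases hy' with rfl | rfl <;> norm_num

/-- Parametrises the face `y = 1`: coordinate `none` encodes `y' = 1 - u none`, and `w` is the
fraction `t` of its largest value `∑ x - 1`. -/
def faceMap (t : ℝ) : (Option V → ℝ) →ᵃ[ℝ] (V → ℝ) × ℝ × ℝ × ℝ where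
  toFun u := (fun v => u (some v), 1, 1 - u none, t * (∑ v, u (some v) - 1))
  linear :=
    { toFun u := (fun v => u (some v), 0, -u none, t * ∑ v, u (some v))
      map_add' u u' := by ext <;> simp [Finset.sum_add_distrib] <;> ring
      map_smul' c u := by ext <;> simp [← Finset.mul_sum, mul_left_comm] }
  map_vadd' u u' := by ext <;> simp [Finset.sum_add_distrib] <;> ring

lemma faceMap_apply (t : ℝ) (u : Option V → ℝ) :
    faceMap t u = (fun v => u (some v), 1, 1 - u none, t * (∑ v, u (some v) - 1)) := rfl

lemma faceMap_mem {t : ℝ} (ht : t ∈ Icc 0 1) {u : Option V → ℝ}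
    (hu : u ∈ cubeSumGe (Option V) 2 ∩ zeroOneVectors (Option V)) : faceMap t u ∈ RDPset V := by
  obtain ⟨⟨hcube, hsum⟩, hzo⟩ := hu
  have hsum' : 2 ≤ u none + ∑ v, u (some v) := by simpa [Fintype.sum_option] using hsum
  have hnone : u none ∈ Icc 0 1 := hcube none (mem_univ _)
  have hw : 0 ≤ ∑ v, u (some v) - 1 := by linarith [hnone.2]
  rw [faceMap_apply]
  refine ⟨fun v => hzo (some v) (mem_univ _), Or.inr rfl, ?_, mul_nonneg ht.1 hw, ?_, ?_,
    fun v => (hcube (some v) (mem_univ _)).2, by linarith [hnone.1]⟩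
  · rcases hzo none (mem_univ _) with h | h <;> simp_all
  · show 2 * (1 - u none) ≤ _; linarith [hnone.1]
  · show t * _ - _ + 1 ≤ 0; nlinarith [ht.2]

lemma mk_one_mem_convexHull {x : V → ℝ} {y' w : ℝ} (hx : ∀ v, x v ∈ Icc 0 1)
    (hy' : y' ∈ Icc 0 1) (hsum : 1 + y' ≤ ∑ v, x v) (hw : w ∈ Icc 0 (∑ v, x v - 1)) :
    (x, 1, y', w) ∈ convexHull ℝ (RDPset V) := by
  set t := w / (∑ v, x v - 1)
  have ht : t ∈ Icc 0 1 :=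
    ⟨div_nonneg hw.1 (hw.1.trans hw.2), div_le_one_of_le₀ hw.2 (hw.1.trans hw.2)⟩
  have htw : t * (∑ v, x v - 1) = w := by
    rcases (hw.1.trans hw.2).eq_or_lt with h | h
    · rw [← h, mul_zero]; linarith [hw.1, hw.2]
    · exact div_mul_cancel₀ w h.ne'
  set u : Option V → ℝ := fun o => o.elim (1 - y') x
  have hu : u ∈ cubeSumGe (Option V) (2 : ℕ) := by
    refine ⟨fun o _ => ?_, ?_⟩
    · cases o with
      | none => exact ⟨sub_nonneg.2 hy'.2, sub_le_self _ hy'.1⟩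
      | some v => exact hx v
    · simp only [mem_ofPred_eq, Fintype.sum_option, u, Option.elim]; push_cast; linarith
  have hmem : faceMap t u ∈
      convexHull ℝ (faceMap t '' (cubeSumGe (Option V) (2 : ℕ) ∩ zeroOneVectors (Option V))) := by
    rw [← AffineMap.image_convexHull]
    exact mem_image_of_mem _ (cubeSumGe.subset_convexHull_zeroOneVectors 2 hu)
  have hpt : faceMap t u = (x, 1, y', w) := by
    simp only [faceMap_apply, u, Option.elim, sub_sub_cancel, htw]
  rw [← hpt]
  refine convexHull_mono ?_ hmem
  rintro _ ⟨u', hu', rfl⟩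
  exact faceMap_mem ht (by simpa using hu')

theorem RDPrelaxation_subset_convexHull : RDPrelaxation V ⊆ convexHull ℝ (RDPset V) := by
  rintro ⟨x, y, y', w⟩ ⟨-, hxy, hy'y, hwy, hyy', hx, ⟨hy0, hy1⟩, ⟨hy'0, -⟩, hw⟩
  have h0 : (0 : (V → ℝ) × ℝ × ℝ × ℝ) ∈ convexHull ℝ (RDPset V) := subset_convexHull ℝ _ zero_mem
  rcases hy0.eq_or_lt with rfl | hy
  · obtain rfl : x = 0 := funext fun v => le_antisymm (hxy v) (hx v).1
    obtain rfl : y' = 0 := le_antisymm hy'y hy'0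
    obtain rfl : w = 0 := le_antisymm (by simpa using hwy) hw
    exact h0
  set c := y⁻¹
  have hc : c * y = 1 := inv_mul_cancel₀ hy.ne'
  have hc0 : 0 ≤ c := inv_nonneg.2 hy0
  have hsum : ∑ v, (c • x) v = c * ∑ v, x v := by simp [Finset.mul_sum]
  have hface : c • (x, y, y', w) ∈ convexHull ℝ (RDPset V) := by
    simp only [Prod.smul_mk, smul_eq_mul, hc]
    refine mk_one_mem_convexHull (fun v => ⟨?_, ?_⟩) ⟨?_, ?_⟩ ?_ ⟨?_, ?_⟩
    · exact mul_nonneg hc0 (hx v).1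
    · exact inv_mul_le_one_of_le₀ (hxy v) hy0
    · exact mul_nonneg hc0 hy'0
    · exact inv_mul_le_one_of_le₀ hy'y hy0
    · rw [hsum]; linarith [mul_le_mul_of_nonneg_left hyy' hc0]
    · exact mul_nonneg hc0 hw
    · rw [hsum]; linarith [mul_le_mul_of_nonneg_left (by linarith : w ≤ ∑ v, x v - y) hc0]
  have hp := (convex_convexHull ℝ _).smul_mem_of_zero_mem h0 hface ⟨hy0, hy1⟩
  rwa [smul_smul, mul_inv_cancel₀ hy.ne', one_smul] at hp

end RDPset

theorem RDP_polytope_description_general (V : Type*) [Fintype V] :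
    convexHull ℝ (RDPset V) =
      {p : (V → ℝ) × ℝ × ℝ × ℝ |
        2 * p.2.2.1 ≤ ∑ v, p.1 v ∧
        (∀ v, p.1 v ≤ p.2.1) ∧
        p.2.2.1 ≤ p.2.1 ∧
        p.2.2.2 - (∑ v, p.1 v) + p.2.1 ≤ 0 ∧
        p.2.1 + p.2.2.1 ≤ ∑ v, p.1 v ∧
        (∀ v, 0 ≤ p.1 v ∧ p.1 v ≤ 1) ∧
        (0 ≤ p.2.1 ∧ p.2.1 ≤ 1) ∧
        (0 ≤ p.2.2.1 ∧ p.2.2.1 ≤ 1) ∧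
        0 ≤ p.2.2.2} :=
  (convexHull_min RDPset.subset_RDPrelaxation convex_RDPrelaxation).antisymm
    RDPset.RDPrelaxation_subset_convexHull

/-- for `|V| ≥ 3`, the polytope `P^RDP = conv(S)` is exactly the set of points
satisfying the listed linear inequalities. -/
theorem RDP_polytope_description (V : Type*) [Fintype V] (hV : 3 ≤ Fintype.card V) :
    convexHull ℝ (RDPset V) =
      {p : (V → ℝ) × ℝ × ℝ × ℝ |
        2 * p.2.2.1 ≤ ∑ v, p.1 v ∧
        (∀ v, p.1 v ≤ p.2.1) ∧
        p.2.2.1 ≤ p.2.1 ∧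
        p.2.2.2 - (∑ v, p.1 v) + p.2.1 ≤ 0 ∧
        p.2.1 + p.2.2.1 ≤ ∑ v, p.1 v ∧
        (∀ v, 0 ≤ p.1 v ∧ p.1 v ≤ 1) ∧
        (0 ≤ p.2.1 ∧ p.2.1 ≤ 1) ∧
        (0 ≤ p.2.2.1 ∧ p.2.2.1 ≤ 1) ∧
        0 ≤ p.2.2.2} :=
  RDP_polytope_description_general V
end

section
/- Assume |V| ≥ 3. Then there exists an affinely independent family of |V| + 3 points of S, each of which satisfies y = y′ (so the valid inequality y ≥ y′ is facet defining for the (|V|+3)-dimensional polytope P^RDP). -/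
open Classical in
/-- The family of nonzero points used in the facet proof. -/
noncomputable def RDPpt (V : Type*) [Fintype V] (e : Fin (Fintype.card V) ≃ V)
    (j : Fin (Fintype.card V + 2)) : (V → ℝ) × ℝ × ℝ × ℝ :=
  if h : (j : ℕ) < Fintype.card V then
    (fun u => if u = e ⟨j, h⟩ then 0 else 1, 1, 1, 0)
  else if (j : ℕ) = Fintype.card V then (fun _ => 1, 1, 1, 0)
  else (fun _ => 1, 1, 1, (Fintype.card V : ℝ) - 1)

/-- The equivalence between `Fin m` and nonzero elements of `Fin (m+1)`. -/
def finNeZeroEquiv (m : ℕ) : Fin m ≃ {x : Fin (m + 1) // x ≠ 0} where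
  toFun j := ⟨j.succ, Fin.succ_ne_zero j⟩
  invFun x := (x : Fin (m + 1)).pred x.2
  left_inv j := by simp
  right_inv x := by simp


/-- for `|V| ≥ 3`, there are `|V| + 3` affinely independent points of `S`
satisfying `y = y′` (so the valid inequality `y ≥ y′` is facet defining for the
`(|V|+3)`-dimensional polytope `P^RDP`). -/
theorem RDP_facet_y_eq_y' (V : Type*) [Fintype V] (hV : 3 ≤ Fintype.card V) :
    ∃ F : Fin (Fintype.card V + 3) → ((V → ℝ) × ℝ × ℝ × ℝ),
      AffineIndependent ℝ F ∧
      ∀ i, F i ∈ RDPset V ∧ (F i).2.1 = (F i).2.2.1 := by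
  classical
  obtain ⟨e⟩ : Nonempty (Fin (Fintype.card V) ≃ V) := ⟨(Fintype.equivFin V).symm⟩
  have hn3 : (3 : ℝ) ≤ (Fintype.card V : ℝ) := by exact_mod_cast hV
  have hsum1 : ∑ _v : V, (1 : ℝ) = (Fintype.card V : ℝ) := by
    simp [Finset.card_univ]
  have hsumq : ∀ w : V, ∑ v : V, (if v = w then (0:ℝ) else 1) = (Fintype.card V : ℝ) - 1 := by
    intro w
    have h1 : ∀ v : V, (if v = w then (0:ℝ) else 1) = 1 - (if v = w then 1 else 0) := by
      intro v; by_cases h : v = w <;> simp [h]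
    rw [Finset.sum_congr rfl fun v _ => h1 v, Finset.sum_sub_distrib, hsum1]
    simp
  -- y-coordinate of every RDPpt is 1, as is y'
  have hy1 : ∀ j, (RDPpt V e j).2.1 = 1 := by
    intro j
    unfold RDPpt
    by_cases h : (j:ℕ) < Fintype.card V
    · simp [h]
    · by_cases h2 : (j:ℕ) = Fintype.card V <;> simp [h, h2]
  have hy'1 : ∀ j, (RDPpt V e j).2.2.1 = 1 := by
    intro j
    unfold RDPpt
    by_cases h : (j:ℕ) < Fintype.card V
    · simp [h]
    · by_cases h2 : (j:ℕ) = Fintype.card V <;> simp [h, h2]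
  refine ⟨Fin.cases 0 (RDPpt V e), ?_, ?_⟩
  · -- affine independence
    rw [affineIndependent_iff_linearIndependent_vsub ℝ _ 0]
    have key : LinearIndependent ℝ (RDPpt V e) := by
      rw [Fintype.linearIndependent_iff]
      intro g hg
      -- component extraction
      have hgw : ∑ j, g j * (RDPpt V e j).2.2.2 = 0 := by
        have h := congrArg (fun p => p.2.2.2) hg
        simpa [Prod.snd_sum, Prod.smul_snd, smul_eq_mul] using h
      have hgy : ∑ j, g j * (RDPpt V e j).2.1 = 0 := by
        have h := congrArg (fun p => p.2.1) hg
        simpa [Prod.snd_sum, Prod.fst_sum, Prod.smul_snd, Prod.smul_fst, smul_eq_mul] using h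
      have hgx : ∀ v : V, ∑ j, g j * (RDPpt V e j).1 v = 0 := by
        intro v
        have h := congrArg (fun p => p.1 v) hg
        simpa [Prod.fst_sum, Prod.smul_fst, Finset.sum_apply, smul_eq_mul] using h
      have hsumg : ∑ j, g j = 0 := by
        have := hgy
        simp only [hy1, mul_one] at this
        exact this
      -- last coordinate
      have hglast : g ⟨Fintype.card V + 1, by omega⟩ = 0 := by
        have hcalc : ∑ j, g j * (RDPpt V e j).2.2.2
            = g ⟨Fintype.card V + 1, by omega⟩ * ((Fintype.card V : ℝ) - 1) := by
          rw [Finset.sum_eq_single (⟨Fintype.card V + 1, by omega⟩ : Fin (Fintype.card V + 2))]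
          · congr 1
            unfold RDPpt
            have h1 : ¬ ((Fintype.card V + 1 : ℕ) < Fintype.card V) := by omega
            have h2 : ¬ ((Fintype.card V + 1 : ℕ) = Fintype.card V) := by omega
            simp [h1, h2]
          · intro b _ hb
            have hb' : (b : ℕ) ≠ Fintype.card V + 1 := fun hh => hb (Fin.ext hh)
            have hz : (RDPpt V e b).2.2.2 = 0 := by
              unfold RDPpt
              by_cases h : (b:ℕ) < Fintype.card V
              · simp [h]
              · have h2 : (b:ℕ) = Fintype.card V := by omega
                simp [h, h2]
            rw [hz, mul_zero]
          · intro h; exact absurd (Finset.mem_univ _) h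
        rw [hcalc] at hgw
        have hne : (Fintype.card V : ℝ) - 1 ≠ 0 := by intro h; nlinarith
        exact (mul_eq_zero.mp hgw).resolve_right hne
      -- x-coordinates kill g for j < n
      have hgk : ∀ k : Fin (Fintype.card V), g ⟨k, by omega⟩ = 0 := by
        intro k
        have hco : ∀ j : Fin (Fintype.card V + 2), (RDPpt V e j).1 (e k) =
            if j = (⟨k, by omega⟩ : Fin (Fintype.card V + 2)) then 0 else 1 := by
          intro j
          unfold RDPpt
          by_cases h : (j:ℕ) < Fintype.card V
          · simp only [dif_pos h]
            by_cases hk : j = (⟨k, by omega⟩ : Fin (Fintype.card V + 2))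
            · have hkk : (⟨(j:ℕ), h⟩ : Fin (Fintype.card V)) = k := by
                apply Fin.ext; simp [hk]
              simp [hk, hkk]
            · have hne : e k ≠ e ⟨(j:ℕ), h⟩ := by
                intro hh
                apply hk
                have h3 := e.injective hh
                apply Fin.ext
                simpa using congrArg Fin.val h3.symm
              simp [hne, hk]
          · have hk : j ≠ (⟨k, by omega⟩ : Fin (Fintype.card V + 2)) := by
              intro hh; apply h; rw [hh]; exact k.isLt
            by_cases h2 : (j:ℕ) = Fintype.card V <;> simp [h, h2, hk]
        have hcalc : ∑ j, g j * (RDPpt V e j).1 (e k)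
            = (∑ j, g j) - g ⟨k, by omega⟩ := by
          have h1 : ∀ j : Fin (Fintype.card V + 2),
              g j * (RDPpt V e j).1 (e k)
              = g j - (if j = (⟨k, by omega⟩ : Fin (Fintype.card V + 2)) then g j else 0) := by
            intro j
            rw [hco j]
            by_cases hj : j = (⟨k, by omega⟩ : Fin (Fintype.card V + 2)) <;> simp [hj]
          rw [Finset.sum_congr rfl fun j _ => h1 j, Finset.sum_sub_distrib,
            Finset.sum_ite_eq' Finset.univ _ g]
          simp
        rw [hgx (e k), hsumg] at hcalc
        linarith [hcalc]
      -- conclude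
      have hzero : ∀ j, j ≠ (⟨Fintype.card V, by omega⟩ : Fin (Fintype.card V + 2)) → g j = 0 := by
        intro j hj
        by_cases h : (j:ℕ) < Fintype.card V
        · have := hgk ⟨(j:ℕ), h⟩
          simpa using this
        · have h2 : (j:ℕ) = Fintype.card V + 1 := by
            have : (j:ℕ) ≠ Fintype.card V := fun hh => hj (Fin.ext hh)
            omega
          have := hglast
          have hj2 : j = (⟨Fintype.card V + 1, by omega⟩ : Fin (Fintype.card V + 2)) :=
            Fin.ext h2
          rw [hj2]; exact this
      intro j
      by_cases hj : j = (⟨Fintype.card V, by omega⟩ : Fin (Fintype.card V + 2))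
      · -- use total sum
        have : ∑ j, g j = g ⟨Fintype.card V, by omega⟩ := by
          rw [Finset.sum_eq_single (⟨Fintype.card V, by omega⟩ : Fin (Fintype.card V + 2))]
          · intro b _ hb; exact hzero b hb
          · intro h; exact absurd (Finset.mem_univ _) h
        rw [hj]
        rw [hsumg] at this
        exact this.symm
      · exact hzero j hj
    -- transfer through the equivalence
    rw [← linearIndependent_equiv (finNeZeroEquiv (Fintype.card V + 2))]
    have hfun : ((fun (i : {x : Fin (Fintype.card V + 3) // x ≠ 0}) =>
        Fin.cases (motive := fun _ => (V → ℝ) × ℝ × ℝ × ℝ) 0 (RDPpt V e) (i : Fin (Fintype.card V + 3))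
          -ᵥ Fin.cases (motive := fun _ => (V → ℝ) × ℝ × ℝ × ℝ) 0 (RDPpt V e) 0) ∘ (finNeZeroEquiv (Fintype.card V + 2)))
        = RDPpt V e := by
      funext j
      show Fin.cases (motive := fun _ => (V → ℝ) × ℝ × ℝ × ℝ) 0 (RDPpt V e) (j.succ)
          -ᵥ Fin.cases (motive := fun _ => (V → ℝ) × ℝ × ℝ × ℝ) 0 (RDPpt V e) 0 = RDPpt V e j
      rw [Fin.cases_succ, Fin.cases_zero, vsub_eq_sub, sub_zero]
    rw [hfun]
    exact key
  · -- membership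
    intro i
    induction i using Fin.cases with
    | zero =>
      simp only [Fin.cases_zero]
      refine ⟨⟨fun v => Or.inl rfl, Or.inl rfl, Or.inl rfl, le_refl _, ?_, ?_, fun v => le_refl _, le_refl _⟩, rfl⟩
      · simp
      · simp
    | succ j =>
      simp only [Fin.cases_succ]
      refine ⟨?_, by rw [hy1, hy'1]⟩
      unfold RDPpt
      by_cases h : (j:ℕ) < Fintype.card V
      · simp only [dif_pos h]
        refine ⟨fun v => ?_, Or.inr rfl, Or.inr rfl, le_refl _, ?_, ?_, fun v => ?_, le_refl _⟩
        · by_cases hv : v = e ⟨(j:ℕ), h⟩ <;> simp [hv]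
        · rw [hsumq]; dsimp only; linarith
        · rw [hsumq]; dsimp only; linarith
        · by_cases hv : v = e ⟨(j:ℕ), h⟩ <;> simp [hv]
      · by_cases h2 : (j:ℕ) = Fintype.card V
        · simp only [dif_neg h, if_pos h2]
          refine ⟨fun v => Or.inr rfl, Or.inr rfl, Or.inr rfl, le_refl _, ?_, ?_, fun v => le_refl _, le_refl _⟩
          · rw [hsum1]; dsimp only; linarith
          · rw [hsum1]; dsimp only; linarith
        · simp only [dif_neg h, if_neg h2]
          refine ⟨fun v => Or.inr rfl, Or.inr rfl, Or.inr rfl, by dsimp only; linarith, ?_, ?_, fun v => le_refl _, le_refl _⟩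
          · rw [hsum1]; dsimp only; linarith
          · rw [hsum1]; dsimp only; linarith
end

section
/- Assume |V| ≥ 3. Then the affine span of S is the whole space (V → ℝ) × ℝ × ℝ × ℝ; equivalently, S contains a family of |V| + 4 affinely independent points, so the route-design polytope P^RDP is full dimensional of dimension |V| + 3. -/
section Aux

variable (V : Type*) [Fintype V] [DecidableEq V]

/-- The auxiliary family of points, indexed by `Option (V ⊕ Fin 3)`. -/
noncomputable def RDPpts : Option (V ⊕ Fin 3) → ((V → ℝ) × ℝ × ℝ × ℝ) := fun i =>
  i.elim 0 (Sum.elim (fun v => (Pi.single v 1, 1, 0, 0))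
    ![((fun _ => 1), 1, 0, 0), ((fun _ => 1), 1, 1, 0),
      ((fun _ => 1), 1, 0, (Fintype.card V : ℝ) - 1)])

/-- The equivalence between `V ⊕ Fin 3` and nonzero indices. -/
def RDPequiv : (V ⊕ Fin 3) ≃ {x : Option (V ⊕ Fin 3) // x ≠ (none : Option (V ⊕ Fin 3))} where
  toFun a := ⟨some a, Option.some_ne_none a⟩
  invFun x := x.1.get (Option.ne_none_iff_isSome.mp x.2)
  left_inv a := rfl
  right_inv x := Subtype.ext (by simp)

lemma RDPpts_mem (hV : 3 ≤ Fintype.card V) : ∀ i, RDPpts V i ∈ RDPset V := by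
  have hn : (3 : ℝ) ≤ (Fintype.card V : ℝ) := by exact_mod_cast hV
  have hone : ∑ v : V, (1 : ℝ) = (Fintype.card V : ℝ) := by
    simp [Finset.card_univ]
  rintro (_ | (v | j))
  · refine ⟨fun v => Or.inl rfl, Or.inl rfl, Or.inl rfl, le_refl _, ?_, ?_, fun v => le_refl _,
      le_refl _⟩ <;> simp [RDPpts]
  · have hsum : ∑ u : V, Pi.single v (1 : ℝ) u = 1 := by
      simp [Finset.sum_pi_single']
    refine ⟨fun u => ?_, Or.inr rfl, Or.inl rfl, le_refl _, ?_, ?_, fun u => ?_, ?_⟩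
    · show ((Pi.single v 1 : V → ℝ) u = 0 ∨ (Pi.single v 1 : V → ℝ) u = 1)
      rcases eq_or_ne u v with h | h <;> simp [Pi.single_apply, h]
    · show 2 * (0:ℝ) ≤ ∑ u : V, Pi.single v (1 : ℝ) u
      rw [hsum]; norm_num
    · show (0:ℝ) - (∑ u : V, Pi.single v (1 : ℝ) u) + 1 ≤ 0
      rw [hsum]; norm_num
    · show ((Pi.single v 1 : V → ℝ) u ≤ 1)
      rcases eq_or_ne u v with h | h <;> simp [Pi.single_apply, h]
    · show (0:ℝ) ≤ 1; norm_num
  · fin_cases j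
    · refine ⟨fun u => Or.inr rfl, Or.inr rfl, Or.inl rfl, le_refl _, ?_, ?_, fun u => le_refl _,
        ?_⟩
      · show (2:ℝ) * 0 ≤ ∑ _u : V, (1:ℝ); rw [hone]; linarith
      · show (0:ℝ) - (∑ _u : V, (1:ℝ)) + 1 ≤ 0; rw [hone]; linarith
      · show (0:ℝ) ≤ 1; norm_num
    · refine ⟨fun u => Or.inr rfl, Or.inr rfl, Or.inr rfl, le_refl _, ?_, ?_, fun u => le_refl _,
        ?_⟩
      · show (2:ℝ) * 1 ≤ ∑ _u : V, (1:ℝ); rw [hone]; linarith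
      · show (0:ℝ) - (∑ _u : V, (1:ℝ)) + 1 ≤ 0; rw [hone]; linarith
      · show (1:ℝ) ≤ 1; norm_num
    · refine ⟨fun u => Or.inr rfl, Or.inr rfl, Or.inl rfl, ?_, ?_, ?_, fun u => le_refl _,
        ?_⟩
      · show (0:ℝ) ≤ (Fintype.card V : ℝ) - 1; linarith
      · show (2:ℝ) * 0 ≤ ∑ _u : V, (1:ℝ); rw [hone]; linarith
      · show ((Fintype.card V : ℝ) - 1) - (∑ _u : V, (1:ℝ)) + 1 ≤ 0; rw [hone]; linarith
      · show (0:ℝ) ≤ 1; norm_num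

lemma RDPpts_linearIndependent (hV : 3 ≤ Fintype.card V) :
    LinearIndependent ℝ (fun a : V ⊕ Fin 3 => RDPpts V (some a)) := by
  have hn : (3 : ℝ) ≤ (Fintype.card V : ℝ) := by exact_mod_cast hV
  rw [Fintype.linearIndependent_iff]
  intro g hg
  rw [Fintype.sum_sum_type, Fin.sum_univ_three] at hg
  have h4 := congrArg (fun p => p.2.2.2) hg
  have h3 := congrArg (fun p => p.2.2.1) hg
  have h2 := congrArg (fun p => p.2.1) hg
  simp [RDPpts, Prod.fst_sum, Prod.snd_sum, Prod.smul_fst, Prod.smul_snd] at h4 h3 h2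
  -- h4 : g (Sum.inr 2) * (n - 1) = 0
  have hc : g (Sum.inr 2) = 0 := by
    rcases h4 with h | h
    · exact h
    · exfalso; linarith
  have hb : g (Sum.inr 1) = 0 := h3
  have h1 : ∀ u : V, g (Sum.inl u) + (g (Sum.inr 0) + g (Sum.inr 1) + g (Sum.inr 2)) = 0 := by
    intro u
    have := congrArg (fun p => p.1 u) hg
    simp [RDPpts, Prod.fst_sum, Prod.smul_fst, Finset.sum_apply, Pi.single_apply,
      mul_ite] at this
    linarith [this]
  have ha : g (Sum.inr 0) = 0 := by
    have hsum : ∑ v : V, g (Sum.inl v) + (g (Sum.inr 0) + g (Sum.inr 1) + g (Sum.inr 2)) = 0 := by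
      have := h2
      linarith [h2]
    have hall : ∑ v : V, g (Sum.inl v) =
        ∑ v : V, (-(g (Sum.inr 0) + g (Sum.inr 1) + g (Sum.inr 2))) := by
      refine Finset.sum_congr rfl fun v _ => ?_
      have := h1 v; linarith
    rw [Finset.sum_const, Finset.card_univ, nsmul_eq_mul] at hall
    rw [hall, hb, hc] at hsum
    have : ((Fintype.card V : ℝ) - 1) * g (Sum.inr 0) = 0 := by ring_nf; ring_nf at hsum; linarith
    rcases mul_eq_zero.mp this with h | h
    · exfalso; linarith
    · exact h
  rintro (u | j)
  · have := h1 u; rw [ha, hb, hc] at this; linarith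
  · fin_cases j
    · exact ha
    · exact hb
    · exact hc

lemma RDPpts_affineIndependent (hV : 3 ≤ Fintype.card V) :
    AffineIndependent ℝ (RDPpts V) := by
  rw [affineIndependent_iff_linearIndependent_vsub ℝ (RDPpts V) none]
  rw [← linearIndependent_equiv (RDPequiv V)]
  have he : (fun i : {x : Option (V ⊕ Fin 3) // x ≠ (none : Option (V ⊕ Fin 3))} =>
      RDPpts V ↑i -ᵥ RDPpts V none) ∘ (RDPequiv V) = fun a => RDPpts V (some a) := by
    funext a
    show RDPpts V (some a) -ᵥ RDPpts V none = RDPpts V (some a)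
    simp [RDPpts, vsub_eq_sub]
  rw [he]
  exact RDPpts_linearIndependent V hV

end Aux

/-- for `|V| ≥ 3`, the affine span of `S` is the whole space; equivalently `S`
contains `|V| + 4` affinely independent points, so `P^RDP` is full dimensional of
dimension `|V| + 3`. -/
theorem RDP_full_dimensional (V : Type*) [Fintype V] (hV : 3 ≤ Fintype.card V) :
    affineSpan ℝ (RDPset V) = ⊤ ∧
    ∃ F : Fin (Fintype.card V + 4) → ((V → ℝ) × ℝ × ℝ × ℝ),
      AffineIndependent ℝ F ∧ ∀ i, F i ∈ RDPset V := by
  letI := Classical.decEq V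
  have hcard : Fintype.card (Fin (Fintype.card V + 4)) = Fintype.card (Option (V ⊕ Fin 3)) := by
    simp
  let e : Fin (Fintype.card V + 4) ≃ Option (V ⊕ Fin 3) := Fintype.equivOfCardEq hcard
  set F : Fin (Fintype.card V + 4) → ((V → ℝ) × ℝ × ℝ × ℝ) := RDPpts V ∘ e with hF
  have hai : AffineIndependent ℝ F :=
    (affineIndependent_equiv e).mpr (RDPpts_affineIndependent V hV)
  have hmem : ∀ i, F i ∈ RDPset V := fun i => RDPpts_mem V hV (e i)
  have hfr : Module.finrank ℝ ((V → ℝ) × ℝ × ℝ × ℝ) = Fintype.card V + 3 := by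
    simp [Module.finrank_prod, Module.finrank_pi]
  have htop : affineSpan ℝ (Set.range F) = ⊤ := by
    rw [hai.affineSpan_eq_top_iff_card_eq_finrank_add_one, hfr]
    simp
  refine ⟨?_, F, hai, hmem⟩
  have : affineSpan ℝ (Set.range F) ≤ affineSpan ℝ (RDPset V) :=
    affineSpan_mono ℝ (Set.range_subset_iff.mpr hmem)
  exact top_unique (htop ▸ this)
end

section
/- Let V be a finite nonempty set and define the polytope P₂ = {(x, y, w) ∈ (V → ℝ) × ℝ × ℝ : x_v ≤ y for every v ∈ V, w − ∑_{v∈V} x_v + y ≤ 0, 0 ≤ x_v ≤ 1 for every v ∈ V, 0 ≤ y ≤ 1, and w ≥ 0}. Then every extreme point (x, y, w) of P₂ is integral: x_v ∈ {0,1} for every v ∈ V, y ∈ {0,1}, and w is a (nonnegative) integer. -/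
/-!
An extreme point `p` of a convex set admits no direction `d ≠ 0` with `p + t • d` in the set for
all small `t`. Since `P₂` is a cone cut off by `y ≤ 1`, scaling `p` by `1 / y` forces `y ∈ {0, 1}`.
A coordinate `x u` strictly between `0` and `y` could be moved together with `w` if `w > 0`,
alone if the row `w - ∑ x + y ≤ 0` is slack, and otherwise (`w = 0`, `∑ x = y`) against a second
coordinate strictly between `0` and `y`, which then exists. So `x` is `0`–`1`-valued, and moving
`w` alone shows that `w` is `0` or the integer `∑ x - y`.
-/

open Filter Topology Finset

section ExtremePoints

variable {E : Type*} [AddCommGroup E] [Module ℝ E] {K : Set E} {p : E}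

theorem eq_zero_of_mem_extremePoints_of_smul_mem (hp : p ∈ K.extremePoints ℝ) (h0 : 0 ∈ K)
    {c : ℝ} (hc : 1 < c) (hcp : c • p ∈ K) : p = 0 := by
  have hc₀ : 0 < c := zero_lt_one.trans hc
  refine (hp.2 h0 hcp ⟨1 - c⁻¹, c⁻¹, sub_pos.2 (inv_lt_one_of_one_lt₀ hc), inv_pos.2 hc₀,
    sub_add_cancel 1 c⁻¹, ?_⟩).symm
  rw [smul_zero, zero_add, smul_smul, inv_mul_cancel₀ hc₀.ne', one_smul]

theorem eq_zero_of_mem_extremePoints_of_eventually_add_smul_mem (hp : p ∈ K.extremePoints ℝ)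
    {d : E} (hd : ∀ᶠ t in 𝓝 (0 : ℝ), p + t • d ∈ K) : d = 0 := by
  obtain ⟨ε, hε, hball⟩ := Metric.eventually_nhds_iff.1 hd
  have hε' : |ε| / 2 < ε := by rw [abs_of_pos hε]; exact half_lt_self hε
  have hseg : p ∈ openSegment ℝ (p + (-(ε / 2)) • d) (p + (ε / 2) • d) :=
    ⟨1 / 2, 1 / 2, by norm_num, by norm_num, by norm_num, by module⟩
  have h := hp.2 (hball (by simpa using hε')) (hball (by simpa using hε')) hseg
  simpa [(half_pos hε).ne'] using h

end ExtremePoints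

theorem eventually_add_mul_le {a b c : ℝ} (h : a ≤ c) (hb : b ≠ 0 → a < c) :
    ∀ᶠ t in 𝓝 (0 : ℝ), a + t * b ≤ c := by
  obtain rfl | hb₀ := eq_or_ne b 0
  · simpa using h
  have hlim : Tendsto (fun t => a + t * b) (𝓝 0) (𝓝 a) := by
    simpa using (tendsto_const_nhds (x := a)).add ((tendsto_id (x := 𝓝 (0 : ℝ))).mul_const b)
  exact (hlim.eventually_lt_const (hb hb₀)).mono fun _ => le_of_lt

theorem eventually_le_add_mul {a b c : ℝ} (h : c ≤ a) (hb : b ≠ 0 → c < a) :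
    ∀ᶠ t in 𝓝 (0 : ℝ), c ≤ a + t * b := by
  refine (eventually_add_mul_le (a := -a) (b := -b) (c := -c) (neg_le_neg h)
    fun hb' => neg_lt_neg (hb (neg_ne_zero.1 hb'))).mono fun t ht => ?_
  linarith

theorem exists_ne_mem_Ioo_of_sum_eq {ι : Type*} [Fintype ι] [DecidableEq ι] {x : ι → ℝ} {y : ℝ}
    (hx : ∀ i, 0 ≤ x i) (hsum : ∑ i, x i = y) {u : ι} (hu : x u ∈ Set.Ioo 0 y) :
    ∃ v ≠ u, x v ∈ Set.Ioo 0 y := by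
  have hrest : ∑ i ∈ univ.erase u, x i = y - x u := by
    rw [← hsum, ← add_sum_erase _ _ (mem_univ u), add_sub_cancel_left]
  obtain ⟨v, hv, hpos⟩ := exists_lt_of_sum_lt (f := 0) (s := univ.erase u) (g := x)
    (by rw [hrest]; simpa using hu.2)
  refine ⟨v, ne_of_mem_erase hv, hpos, ?_⟩
  calc x v ≤ ∑ i ∈ univ.erase u, x i := single_le_sum (fun i _ => hx i) hv
    _ < y := by rw [hrest]; linarith [hu.1]

def polytopeP2 (V : Type*) [Fintype V] : Set ((V → ℝ) × ℝ × ℝ) :=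
  {q | (∀ v, q.1 v ≤ q.2.1) ∧ q.2.2 - (∑ v, q.1 v) + q.2.1 ≤ 0 ∧
    (∀ v, 0 ≤ q.1 v ∧ q.1 v ≤ 1) ∧ (0 ≤ q.2.1 ∧ q.2.1 ≤ 1) ∧ 0 ≤ q.2.2}

namespace polytopeP2

variable {V : Type*} [Fintype V] {x : V → ℝ} {y w : ℝ}

theorem smul_mem {q : (V → ℝ) × ℝ × ℝ} (hq : q ∈ polytopeP2 V) {c : ℝ} (hc : 0 ≤ c)
    (hcy : c * q.2.1 ≤ 1) : c • q ∈ polytopeP2 V := by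
  obtain ⟨hxy, hrow, hx, ⟨hy, -⟩, hw⟩ := hq
  refine ⟨fun v => ?_, ?_, fun v => ⟨?_, ?_⟩, ⟨?_, hcy⟩, ?_⟩ <;>
    simp only [Prod.smul_fst, Prod.smul_snd, Pi.smul_apply, smul_eq_mul]
  · exact mul_le_mul_of_nonneg_left (hxy v) hc
  · rw [← mul_sum, ← mul_sub, ← mul_add]
    exact mul_nonpos_of_nonneg_of_nonpos hc hrow
  · exact mul_nonneg hc (hx v).1
  · exact (mul_le_mul_of_nonneg_left (hxy v) hc).trans hcy
  · exact mul_nonneg hc hy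
  · exact mul_nonneg hc hw

theorem snd_fst_eq_zero_or_one {p : (V → ℝ) × ℝ × ℝ} (hp : p ∈ (polytopeP2 V).extremePoints ℝ) :
    p.2.1 = 0 ∨ p.2.1 = 1 := by
  obtain ⟨-, -, -, ⟨hy₀, hy₁⟩, -⟩ := hp.1
  by_contra! h
  have hypos : 0 < p.2.1 := hy₀.lt_of_ne' h.1
  have h0 : (0 : (V → ℝ) × ℝ × ℝ) ∈ polytopeP2 V := by
    simpa using smul_mem hp.1 le_rfl (by simp)
  have hp0 := eq_zero_of_mem_extremePoints_of_smul_mem hp h0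
    ((one_lt_inv₀ hypos).2 (hy₁.lt_of_ne h.2))
    (smul_mem hp.1 (inv_nonneg.2 hy₀) (inv_mul_cancel₀ hypos.ne').le)
  exact h.1 (by simp [hp0])

theorem eventually_add_smul_mem (hp : (x, y, w) ∈ polytopeP2 V)
    {dx : V → ℝ} {dw : ℝ} (hdx : ∀ v, dx v ≠ 0 → x v ∈ Set.Ioo 0 y) (hdw₀ : dw ≠ 0 → 0 < w)
    (hdw : dw ≠ ∑ v, dx v → w - ∑ v, x v + y < 0) :
    ∀ᶠ t in 𝓝 (0 : ℝ), (x, y, w) + t • (dx, 0, dw) ∈ polytopeP2 V := by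
  obtain ⟨hxy, hrow, hx, hy, hw⟩ := hp
  have hrow' : ∀ t : ℝ, w + t * dw - ∑ v, (x v + t * dx v) + y
      = w - ∑ v, x v + y + t * (dw - ∑ v, dx v) := fun t => by
    rw [sum_add_distrib, ← mul_sum]; ring
  simp only [polytopeP2, Set.mem_ofPred_eq, Prod.fst_add, Prod.snd_add, Prod.smul_fst,
    Prod.smul_snd, Pi.add_apply, Pi.smul_apply, smul_eq_mul, mul_zero, add_zero, hrow']
  refine (eventually_all.2 fun v => ?_).and (.and ?_ ((eventually_all.2 fun v => ?_).and
    (.and (.of_forall fun _ => hy) ?_)))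
  · exact eventually_add_mul_le (hxy v) fun h => (hdx v h).2
  · exact eventually_add_mul_le hrow fun h => hdw fun h' => h (sub_eq_zero.2 h')
  · exact (eventually_le_add_mul (hx v).1 fun h => (hdx v h).1).and
      (eventually_add_mul_le (hx v).2 fun h => (hdx v h).2.trans_le hy.2)
  · exact eventually_le_add_mul hw hdw₀

theorem eq_zero_of_mem_extremePoints (hp : (x, y, w) ∈ (polytopeP2 V).extremePoints ℝ)
    {dx : V → ℝ} {dw : ℝ} (hdx : ∀ v, dx v ≠ 0 → x v ∈ Set.Ioo 0 y) (hdw₀ : dw ≠ 0 → 0 < w)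
    (hdw : dw ≠ ∑ v, dx v → w - ∑ v, x v + y < 0) : dx = 0 ∧ dw = 0 := by
  have := eq_zero_of_mem_extremePoints_of_eventually_add_smul_mem hp
    (eventually_add_smul_mem hp.1 hdx hdw₀ hdw)
  simpa using this

theorem snd_snd_eq_zero_or_eq (hp : (x, y, w) ∈ (polytopeP2 V).extremePoints ℝ) :
    w = 0 ∨ w = ∑ v, x v - y := by
  obtain ⟨-, hrow, -, -, hw⟩ := hp.1
  by_contra! h
  have := eq_zero_of_mem_extremePoints hp (dx := 0) (dw := 1) (by simp)
    (fun _ => hw.lt_of_ne' h.1) (fun _ => hrow.lt_of_ne fun h' => h.2 (by linarith))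
  simp at this

theorem eq_of_mem_Ioo (hp : (x, y, w) ∈ (polytopeP2 V).extremePoints ℝ) {u v : V}
    (hu : x u ∈ Set.Ioo 0 y) (hv : x v ∈ Set.Ioo 0 y) : u = v := by
  classical
  by_contra huv
  have := eq_zero_of_mem_extremePoints hp (dx := Pi.single u 1 - Pi.single v 1) (dw := 0)
    (fun j hj => by
      by_cases hju : j = u
      · exact hju ▸ hu
      by_cases hjv : j = v
      · exact hjv ▸ hv
      simp [hju, hjv] at hj)
    (by simp) (by simp [sum_sub_distrib])
  simpa [huv] using congr_fun this.1 u

theorem fst_eq_zero_or_eq (hp : (x, y, w) ∈ (polytopeP2 V).extremePoints ℝ) (u : V) :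
    x u = 0 ∨ x u = y := by
  classical
  obtain ⟨hxy, hrow, hx, -, hw⟩ := hp.1
  by_contra! h
  have hu : x u ∈ Set.Ioo 0 y := ⟨(hx u).1.lt_of_ne' h.1, (hxy u).lt_of_ne h.2⟩
  have hdx : ∀ j, (Pi.single u 1 : V → ℝ) j ≠ 0 → x j ∈ Set.Ioo 0 y := fun j hj => by
    obtain rfl : j = u := by by_contra hju; simp [hju] at hj
    exact hu
  obtain hw₀ | rfl := hw.lt_or_eq'
  · have := eq_zero_of_mem_extremePoints hp (dw := 1) hdx (fun _ => hw₀) (by simp)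
    simpa using congr_fun this.1 u
  obtain hslack | htight := hrow.lt_or_eq
  · have := eq_zero_of_mem_extremePoints hp (dw := 0) hdx (by simp) (fun _ => hslack)
    simpa using congr_fun this.1 u
  obtain ⟨v, hvu, hv⟩ := exists_ne_mem_Ioo_of_sum_eq (fun j => (hx j).1) (by linarith) hu
  exact hvu (eq_of_mem_Ioo hp hv hu)

end polytopeP2

theorem P2_extreme_points_integral_general (V : Type*) [Fintype V]
    (p : (V → ℝ) × ℝ × ℝ)
    (hp : p ∈ Set.extremePoints ℝ
      {q : (V → ℝ) × ℝ × ℝ | (∀ v, q.1 v ≤ q.2.1) ∧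
        q.2.2 - (∑ v, q.1 v) + q.2.1 ≤ 0 ∧
        (∀ v, 0 ≤ q.1 v ∧ q.1 v ≤ 1) ∧ (0 ≤ q.2.1 ∧ q.2.1 ≤ 1) ∧ 0 ≤ q.2.2}) :
    (∀ v, p.1 v = 0 ∨ p.1 v = 1) ∧ (p.2.1 = 0 ∨ p.2.1 = 1) ∧ ∃ k : ℕ, p.2.2 = (k : ℝ) := by
  obtain ⟨x, y, w⟩ := p
  have hy : y = 0 ∨ y = 1 := polytopeP2.snd_fst_eq_zero_or_one hp
  have hx : ∀ v, x v = 0 ∨ x v = 1 := fun v => by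
    rcases hy with rfl | rfl
    · exact .inl ((polytopeP2.fst_eq_zero_or_eq hp v).elim id id)
    · exact polytopeP2.fst_eq_zero_or_eq hp v
  refine ⟨hx, hy, ?_⟩
  have hnat : ∀ r : ℝ, r = 0 ∨ r = 1 → ∃ k : ℕ, r = k := by
    rintro r (rfl | rfl)
    exacts [⟨0, Nat.cast_zero.symm⟩, ⟨1, Nat.cast_one.symm⟩]
  obtain ⟨m, rfl⟩ := hnat y hy
  choose n hn using fun v => hnat (x v) (hx v)
  have hsum : ∑ v, x v = ((∑ v, n v : ℕ) : ℝ) := by push_cast; exact sum_congr rfl fun v _ => hn v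
  obtain rfl | hw := polytopeP2.snd_snd_eq_zero_or_eq hp
  · exact ⟨0, Nat.cast_zero.symm⟩
  · have hw₀ : (0 : ℝ) ≤ w := hp.1.2.2.2.2
    have hm : m ≤ ∑ v, n v := by
      rw [← Nat.cast_le (α := ℝ), ← hsum]
      linarith
    exact ⟨∑ v, n v - m, by rw [Nat.cast_sub hm, ← hsum, hw]⟩

/-- every extreme point `(x, y, w)` of the polytope
`P₂ = {(x, y, w) : x v ≤ y, w − ∑ x v + y ≤ 0, 0 ≤ x v ≤ 1, 0 ≤ y ≤ 1, w ≥ 0}` is integral. -/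
theorem P2_extreme_points_integral (V : Type*) [Fintype V] [Nonempty V]
    (p : (V → ℝ) × ℝ × ℝ)
    (hp : p ∈ Set.extremePoints ℝ
      {q : (V → ℝ) × ℝ × ℝ | (∀ v, q.1 v ≤ q.2.1) ∧
        q.2.2 - (∑ v, q.1 v) + q.2.1 ≤ 0 ∧
        (∀ v, 0 ≤ q.1 v ∧ q.1 v ≤ 1) ∧ (0 ≤ q.2.1 ∧ q.2.1 ≤ 1) ∧ 0 ≤ q.2.2}) :
    (∀ v, p.1 v = 0 ∨ p.1 v = 1) ∧ (p.2.1 = 0 ∨ p.2.1 = 1) ∧ ∃ k : ℕ, p.2.2 = (k : ℝ) :=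
  P2_extreme_points_integral_general V p hp
end

section
/- Assume n ≥ 2 and let f : I → ℝ take values in {0,1}. If f satisfies ∑_{v < v_max} f(v_max, v) ≤ 1, where v_max denotes the largest element of Fin n, and f(u,v) + ∑_{w < v} f(v,w) ≤ 1 for every (u,v) ∈ I with v strictly greater than the smallest element of Fin n, then f specifies a star partition. -/
/-- The index set `I = {(u, v) : v < u}` of ordered pairs of distinct indices in `Fin n`. -/
abbrev Idx (n : ℕ) : Type := {p : Fin n × Fin n // p.2 < p.1}

/-- `f : Idx n → ℝ` specifies a star partition: it is 0/1-valued and there are pairwise disjoint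
subsets `U 1, …, U k` of `Fin n` with centers `u s ∈ U s` that are minimal in their star,
such that `f (u, v) = 1` exactly when `v = u s` and `u ∈ U s \ {u s}` for some `s`. -/
def IsStarPartition {n : ℕ} (f : Idx n → ℝ) : Prop :=
  (∀ p, f p = 0 ∨ f p = 1) ∧
  ∃ (k : ℕ) (U : Fin k → Finset (Fin n)) (u : Fin k → Fin n),
    (∀ s t, s ≠ t → Disjoint (U s) (U t)) ∧
    (∀ s, u s ∈ U s) ∧
    (∀ s, ∀ w ∈ U s, w ≠ u s → u s < w) ∧
    (∀ p : Idx n, f p = 1 ↔ ∃ s, p.1.2 = u s ∧ p.1.1 ∈ U s ∧ p.1.1 ≠ u s)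

/-- for `n ≥ 2`, every 0/1-valued `f : I → ℝ` satisfying
`∑_{v < v_max} f(v_max, v) ≤ 1` and `f(u,v) + ∑_{w < v} f(v,w) ≤ 1` for every `(u,v) ∈ I`
with `v` above the smallest element specifies a star partition. -/
theorem integral_point_isStarPartition (n : ℕ) (hn : 2 ≤ n)
    (vmax vmin : Fin n) (hmax : ∀ v, v ≤ vmax) (hmin : ∀ v, vmin ≤ v)
    (f : Idx n → ℝ) (h01 : ∀ p, f p = 0 ∨ f p = 1)
    (hvmax : (∑ v : Fin n, if h : v < vmax then f ⟨(vmax, v), h⟩ else 0) ≤ 1)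
    (hstruct : ∀ p : Idx n, vmin < p.1.2 →
      f p + (∑ w : Fin n, if h : w < p.1.2 then f ⟨(p.1.2, w), h⟩ else 0) ≤ 1) :
    IsStarPartition f := by
  classical
  refine ⟨h01, ?_⟩
  have hnn : ∀ p, 0 ≤ f p := fun p => by rcases h01 p with h | h <;> simp [h]
  set g : Fin n → ℝ := fun v => ∑ w : Fin n, if h : w < v then f ⟨(v, w), h⟩ else 0 with hg
  have htnn : ∀ v w : Fin n, 0 ≤ (if h : w < v then f ⟨(v, w), h⟩ else 0) := by
    intro v w; split
    · exact hnn _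
    · exact le_refl 0
  have hgnn : ∀ v, 0 ≤ g v := fun v => Finset.sum_nonneg fun w _ => htnn v w
  have hgmin : ∀ v, ¬ vmin < v → g v = 0 := by
    intro v hv
    refine Finset.sum_eq_zero fun w _ => ?_
    rw [dif_neg]
    intro hwv
    exact hv (lt_of_le_of_lt (hmin w) hwv)
  have hrow : ∀ v, g v ≤ 1 := by
    intro v
    by_cases hvm : v = vmax
    · subst hvm; exact hvmax
    · by_cases hvmin : vmin < v
      · have hv : v < vmax := lt_of_le_of_ne (hmax v) hvm
        have := hstruct ⟨(vmax, v), hv⟩ hvmin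
        have h2 := hnn ⟨(vmax, v), hv⟩
        simp only [hg] at *
        linarith
      · rw [hgmin v hvmin]; norm_num
  -- center zero-row lemma
  have hzero : ∀ p : Idx n, f p = 1 → g p.1.2 = 0 := by
    intro p hp
    by_cases hvmin : vmin < p.1.2
    · have := hstruct p hvmin
      rw [hp] at this
      have := hgnn p.1.2
      simp only [hg] at *
      linarith
    · exact hgmin _ hvmin
  have hentry : ∀ v, g v = 0 → ∀ w (hw : w < v), f ⟨(v, w), hw⟩ = 0 := by
    intro v hv w hw
    have := (Finset.sum_eq_zero_iff_of_nonneg (fun w _ => htnn v w)).1 hv w (Finset.mem_univ w)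
    rwa [dif_pos hw] at this
  -- uniqueness of out-edge
  have huniq : ∀ (a v1 v2 : Fin n) (h1 : v1 < a) (h2 : v2 < a),
      f ⟨(a, v1), h1⟩ = 1 → f ⟨(a, v2), h2⟩ = 1 → v1 = v2 := by
    intro a v1 v2 h1 h2 hf1 hf2
    by_contra hne
    have hsub : ({v1, v2} : Finset (Fin n)) ⊆ Finset.univ := Finset.subset_univ _
    have hle : ∑ w ∈ ({v1, v2} : Finset (Fin n)),
        (if h : w < a then f ⟨(a, w), h⟩ else 0) ≤ g a :=
      Finset.sum_le_sum_of_subset_of_nonneg hsub (fun w _ _ => htnn a w)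
    rw [Finset.sum_pair hne, dif_pos h1, dif_pos h2, hf1, hf2] at hle
    have := hrow a
    linarith
  -- centers
  set D : Finset (Fin n) :=
    Finset.univ.filter (fun v => ∃ a, ∃ h : v < a, f ⟨(a, v), h⟩ = 1) with hD
  set e := D.equivFin with he
  refine ⟨D.card, ?_, fun s => (e.symm s : Fin n), ?_, ?_, ?_, ?_⟩
  · exact fun s => insert (e.symm s : Fin n)
      (Finset.univ.filter (fun w => ∃ h : ((e.symm s : Fin n) < w), f ⟨(w, e.symm s), h⟩ = 1))
  · -- disjoint
    intro s t hst
    have hcd : (e.symm s : Fin n) ≠ (e.symm t : Fin n) := by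
      intro hctr
      exact hst (e.symm.injective (Subtype.ext hctr))
    rw [Finset.disjoint_left]
    intro x hxs hxt
    set c := (e.symm s : Fin n)
    set d := (e.symm t : Fin n)
    have hcmem := (e.symm s).2
    have hdmem := (e.symm t).2
    simp only [hD, Finset.mem_filter] at hcmem hdmem
    obtain ⟨_, a1, ha1, hf1⟩ := hcmem
    obtain ⟨_, a2, ha2, hf2⟩ := hdmem
    have hgc : g c = 0 := hzero ⟨(a1, c), ha1⟩ hf1
    have hgd : g d = 0 := hzero ⟨(a2, d), ha2⟩ hf2
    rcases Finset.mem_insert.1 hxs with hxc | hxs'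
    · rcases Finset.mem_insert.1 hxt with hxd | hxt'
      · exact hcd (hxc ▸ hxd ▸ rfl)
      · obtain ⟨_, h, hf⟩ := Finset.mem_filter.1 hxt'
        subst hxc
        rw [hentry c hgc d h] at hf
        norm_num at hf
    · rcases Finset.mem_insert.1 hxt with hxd | hxt'
      · obtain ⟨_, h, hf⟩ := Finset.mem_filter.1 hxs'
        subst hxd
        rw [hentry d hgd c h] at hf
        norm_num at hf
      · obtain ⟨_, h1, hf1'⟩ := Finset.mem_filter.1 hxs'
        obtain ⟨_, h2, hf2'⟩ := Finset.mem_filter.1 hxt'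
        exact hcd (huniq x c d h1 h2 hf1' hf2')
  · intro s; exact Finset.mem_insert_self _ _
  · intro s w hw hne
    rcases Finset.mem_insert.1 hw with h | h
    · exact absurd h hne
    · obtain ⟨_, h', _⟩ := Finset.mem_filter.1 h
      exact h'
  · intro p
    obtain ⟨⟨a, b⟩, hab⟩ := p
    simp only []
    constructor
    · intro hfp
      have hbD : b ∈ D := by
        simp only [hD, Finset.mem_filter]
        exact ⟨Finset.mem_univ b, a, hab, hfp⟩
      refine ⟨e ⟨b, hbD⟩, ?_, ?_, ?_⟩
      · rw [Equiv.symm_apply_apply]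
      · rw [Equiv.symm_apply_apply]
        refine Finset.mem_insert_of_mem ?_
        rw [Finset.mem_filter]
        exact ⟨Finset.mem_univ a, hab, hfp⟩
      · rw [Equiv.symm_apply_apply]
        exact ne_of_gt hab
    · rintro ⟨s, hb, ha, hne⟩
      have ha' : a ∈ Finset.univ.filter
          (fun w => ∃ h : ((e.symm s : Fin n) < w), f ⟨(w, e.symm s), h⟩ = 1) := by
        rcases Finset.mem_insert.1 ha with h | h
        · exact absurd h hne
        · exact h
      obtain ⟨_, h', hf⟩ := Finset.mem_filter.1 ha'
      have : (⟨(a, b), hab⟩ : Idx n) = ⟨(a, (e.symm s : Fin n)), h'⟩ := by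
        apply Subtype.ext
        simp [hb]
      rw [this]
      exact hf
end

section
/- Assume n ≥ 3 and fix (u₀, v₀) ∈ I with v₀ strictly greater than the smallest element of Fin n. Then: (i) every vector f that specifies a star partition satisfies f(u₀, v₀) + ∑_{w < v₀} f(v₀, w) ≤ 1; and (ii) there exists an affinely independent family of n(n−1)/2 vectors, each specifying a star partition and each satisfying f(u₀, v₀) + ∑_{w < v₀} f(v₀, w) = 1 (so the inequality is facet defining for the convex hull of the star-partition vectors, which has dimension n(n−1)/2). -/
namespace StarPartitionFacetAux

variable {n : ℕ}

lemma idx_ext_iff {p q : Idx n} : p = q ↔ p.1.1 = q.1.1 ∧ p.1.2 = q.1.2 := by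
  rw [Subtype.ext_iff, Prod.ext_iff]

lemma isSP_of_stars {k : ℕ} (U : Fin k → Finset (Fin n)) (u : Fin k → Fin n)
    (hdisj : ∀ s t, s ≠ t → Disjoint (U s) (U t)) (hmem : ∀ s, u s ∈ U s)
    (hmin : ∀ s, ∀ w ∈ U s, w ≠ u s → u s < w)
    (f : Idx n → ℝ) (hf0 : ∀ p, f p = 0 ∨ f p = 1)
    (hf : ∀ p : Idx n, f p = 1 ↔ ∃ s, p.1.2 = u s ∧ p.1.1 ∈ U s) :
    IsStarPartition f := by
  refine ⟨hf0, k, U, u, hdisj, hmem, hmin, fun p => ?_⟩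
  rw [hf]
  constructor
  · rintro ⟨s, h1, h2⟩
    refine ⟨s, h1, h2, ?_⟩
    have := p.2
    rw [h1] at this
    exact ne_of_gt this
  · rintro ⟨s, h1, h2, _⟩; exact ⟨s, h1, h2⟩

/-- Companion edge used to put a vector on the facet hyperplane. -/
def auxEdge (vmin : Fin n) (p₀ : Idx n) (hp₀ : vmin < p₀.1.2) (q : Idx n) : Idx n :=
  if q.1.1 = p₀.1.2 ∨ q = p₀ then q
  else if h : q.1.2 < p₀.1.2 then ⟨(p₀.1.2, q.1.2), h⟩
  else if q.1.2 = p₀.1.2 then p₀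
  else ⟨(p₀.1.2, vmin), hp₀⟩

lemma auxEdge_of_B (vmin : Fin n) (p₀ : Idx n) (hp₀ : vmin < p₀.1.2) (q : Idx n)
    (h : q.1.1 = p₀.1.2 ∨ q = p₀) : auxEdge vmin p₀ hp₀ q = q := if_pos h

lemma auxEdge_B (vmin : Fin n) (p₀ : Idx n) (hp₀ : vmin < p₀.1.2) (q : Idx n) :
    (auxEdge vmin p₀ hp₀ q).1.1 = p₀.1.2 ∨ auxEdge vmin p₀ hp₀ q = p₀ := by
  unfold auxEdge
  split_ifs with h1 h2 h3
  · exact h1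
  · left; rfl
  · right; rfl
  · left; rfl

/-- The facet-point vectors: indicator of `{q, auxEdge q}`. -/
def Gvec (vmin : Fin n) (p₀ : Idx n) (hp₀ : vmin < p₀.1.2) (q : Idx n) : Idx n → ℝ :=
  fun p => if p = q ∨ p = auxEdge vmin p₀ hp₀ q then 1 else 0

lemma gvec_01 (vmin : Fin n) (p₀ : Idx n) (hp₀ : vmin < p₀.1.2) (q : Idx n) :
    ∀ p, Gvec vmin p₀ hp₀ q p = 0 ∨ Gvec vmin p₀ hp₀ q p = 1 := by
  intro p; unfold Gvec; split_ifs <;> simp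

lemma gvec_eq_one_iff (vmin : Fin n) (p₀ : Idx n) (hp₀ : vmin < p₀.1.2) (q p : Idx n) :
    Gvec vmin p₀ hp₀ q p = 1 ↔ (p = q ∨ p = auxEdge vmin p₀ hp₀ q) := by
  unfold Gvec; split_ifs with h <;> simp [h]

lemma gvec_isSP (vmin : Fin n) (p₀ : Idx n) (hp₀ : vmin < p₀.1.2) (q : Idx n) :
    IsStarPartition (Gvec vmin p₀ hp₀ q) := by
  by_cases hB : q.1.1 = p₀.1.2 ∨ q = p₀
  · -- single star {q.2, q.1} centered at q.2
    have ha : auxEdge vmin p₀ hp₀ q = q := auxEdge_of_B vmin p₀ hp₀ q hB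
    refine isSP_of_stars (fun _ : Fin 1 => {q.1.2, q.1.1}) (fun _ => q.1.2)
      (fun s t hst => absurd (Subsingleton.elim s t) hst)
      (fun _ => Finset.mem_insert_self _ _) ?_ _ (gvec_01 vmin p₀ hp₀ q) ?_
    · intro s w hw hne
      rcases Finset.mem_insert.1 hw with h | h
      · exact absurd h hne
      · rw [Finset.mem_singleton.1 h]; exact q.2
    · intro p
      rw [gvec_eq_one_iff, ha, or_self]
      constructor
      · rintro rfl
        exact ⟨0, rfl, Finset.mem_insert.2 (Or.inr (Finset.mem_singleton_self _))⟩
      · rintro ⟨s, h1, h2⟩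
        rcases Finset.mem_insert.1 h2 with h3 | h3
        · have := p.2; rw [h1] at this; rw [h3] at this; exact absurd rfl (ne_of_gt this)
        · exact idx_ext_iff.2 ⟨Finset.mem_singleton.1 h3, h1⟩
  · rcases lt_trichotomy q.1.2 p₀.1.2 with hlt | heq | hgt
    · -- single star {q.2, q.1, v₀} centered at q.2
      have ha : auxEdge vmin p₀ hp₀ q = ⟨(p₀.1.2, q.1.2), hlt⟩ := by
        unfold auxEdge; rw [if_neg hB, dif_pos hlt]
      refine isSP_of_stars (fun _ : Fin 1 => {q.1.2, q.1.1, p₀.1.2}) (fun _ => q.1.2)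
        (fun s t hst => absurd (Subsingleton.elim s t) hst)
        (fun _ => Finset.mem_insert_self _ _) ?_ _ (gvec_01 vmin p₀ hp₀ q) ?_
      · intro s w hw hne
        rcases Finset.mem_insert.1 hw with h | h
        · exact absurd h hne
        rcases Finset.mem_insert.1 h with h | h
        · rw [h]; exact q.2
        · rw [Finset.mem_singleton.1 h]; exact hlt
      · intro p
        rw [gvec_eq_one_iff, ha]
        constructor
        · rintro (rfl | rfl)
          · exact ⟨0, rfl, by simp⟩
          · exact ⟨0, rfl, by simp⟩
        · rintro ⟨s, h1, h2⟩
          rcases Finset.mem_insert.1 h2 with h3 | h3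
          · have := p.2; rw [h1] at this; rw [h3] at this; exact absurd rfl (ne_of_gt this)
          rcases Finset.mem_insert.1 h3 with h4 | h4
          · exact Or.inl (idx_ext_iff.2 ⟨h4, h1⟩)
          · exact Or.inr (idx_ext_iff.2 ⟨Finset.mem_singleton.1 h4, h1⟩)
    · -- single star {v₀, q.1, u₀} centered at v₀
      have ha : auxEdge vmin p₀ hp₀ q = p₀ := by
        unfold auxEdge
        rw [if_neg hB, dif_neg (by rw [heq]; exact lt_irrefl _), if_pos heq]
      refine isSP_of_stars (fun _ : Fin 1 => {p₀.1.2, q.1.1, p₀.1.1}) (fun _ => p₀.1.2)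
        (fun s t hst => absurd (Subsingleton.elim s t) hst)
        (fun _ => Finset.mem_insert_self _ _) ?_ _ (gvec_01 vmin p₀ hp₀ q) ?_
      · intro s w hw hne
        rcases Finset.mem_insert.1 hw with h | h
        · exact absurd h hne
        rcases Finset.mem_insert.1 h with h | h
        · rw [h]; rw [← heq]; exact q.2
        · rw [Finset.mem_singleton.1 h]; exact p₀.2
      · intro p
        rw [gvec_eq_one_iff, ha]
        constructor
        · rintro (rfl | rfl)
          · exact ⟨0, heq, by simp⟩
          · exact ⟨0, rfl, by simp⟩
        · rintro ⟨s, h1, h2⟩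
          rcases Finset.mem_insert.1 h2 with h3 | h3
          · have := p.2; rw [h1] at this; rw [h3] at this; exact absurd rfl (ne_of_gt this)
          rcases Finset.mem_insert.1 h3 with h4 | h4
          · exact Or.inl (idx_ext_iff.2 ⟨h4, h1.trans heq.symm⟩)
          · exact Or.inr (idx_ext_iff.2 ⟨Finset.mem_singleton.1 h4, h1⟩)
    · -- two stars {q.2, q.1} centered at q.2 and {vmin, v₀} centered at vmin
      have hne2 : ¬ q.1.2 < p₀.1.2 := not_lt_of_gt hgt
      have hne3 : q.1.2 ≠ p₀.1.2 := ne_of_gt hgt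
      have ha : auxEdge vmin p₀ hp₀ q = ⟨(p₀.1.2, vmin), hp₀⟩ := by
        unfold auxEdge; rw [if_neg hB, dif_neg hne2, if_neg hne3]
      refine isSP_of_stars (![{q.1.2, q.1.1}, {vmin, p₀.1.2}]) (![q.1.2, vmin])
        ?_ ?_ ?_ _ (gvec_01 vmin p₀ hp₀ q) ?_
      · -- disjointness
        have key : Disjoint ({q.1.2, q.1.1} : Finset (Fin n)) {vmin, p₀.1.2} := by
          rw [Finset.disjoint_left]
          intro a hamem hamem2
          have h1 : q.1.2 ≤ a := by
            rcases Finset.mem_insert.1 hamem with h | h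
            · exact le_of_eq h.symm
            · rw [Finset.mem_singleton.1 h]; exact le_of_lt q.2
          have h2 : a < q.1.2 := by
            rcases Finset.mem_insert.1 hamem2 with h | h
            · rw [h]; exact lt_trans hp₀ hgt
            · rw [Finset.mem_singleton.1 h]; exact hgt
          exact absurd h2 (not_lt_of_ge h1)
        intro s t hst
        fin_cases s <;> fin_cases t <;>
          simp only [Matrix.cons_val_zero, Matrix.cons_val_one, Matrix.head_cons]
        · exact absurd rfl hst
        · exact key
        · exact key.symm
        · exact absurd rfl hst
      · intro s
        fin_cases s <;>
          simp only [Matrix.cons_val_zero, Matrix.cons_val_one, Matrix.head_cons] <;>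
          exact Finset.mem_insert_self _ _
      · intro s w hw hne
        fin_cases s <;>
          simp only [Matrix.cons_val_zero, Matrix.cons_val_one, Matrix.head_cons] at hw hne ⊢
        · rcases Finset.mem_insert.1 hw with h | h
          · exact absurd h hne
          · rw [Finset.mem_singleton.1 h]; exact q.2
        · rcases Finset.mem_insert.1 hw with h | h
          · exact absurd h hne
          · rw [Finset.mem_singleton.1 h]; exact hp₀
      · intro p
        rw [gvec_eq_one_iff, ha]
        constructor
        · rintro (rfl | rfl)
          · exact ⟨0, by simp, by simp⟩
          · exact ⟨1, by simp, by simp⟩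
        · rintro ⟨s, h1, h2⟩
          fin_cases s <;>
            simp only [Matrix.cons_val_zero, Matrix.cons_val_one, Matrix.head_cons] at h1 h2
          · rcases Finset.mem_insert.1 h2 with h3 | h3
            · have := p.2; rw [h1] at this; rw [h3] at this; exact absurd rfl (ne_of_gt this)
            · exact Or.inl (idx_ext_iff.2 ⟨Finset.mem_singleton.1 h3, h1⟩)
          · rcases Finset.mem_insert.1 h2 with h3 | h3
            · have := p.2; rw [h1] at this; rw [h3] at this; exact absurd rfl (ne_of_gt this)
            · exact Or.inr (idx_ext_iff.2 ⟨Finset.mem_singleton.1 h3, h1⟩)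

lemma sum_indicator (p₀ : Idx n) (r : Idx n) :
    (∑ w : Fin n, if h : w < p₀.1.2 then (if (⟨(p₀.1.2, w), h⟩ : Idx n) = r then (1 : ℝ) else 0)
      else 0) = if r.1.1 = p₀.1.2 then 1 else 0 := by
  by_cases hr : r.1.1 = p₀.1.2
  · rw [if_pos hr]
    have hlt : r.1.2 < p₀.1.2 := by rw [← hr]; exact r.2
    have hEq : (⟨(p₀.1.2, r.1.2), hlt⟩ : Idx n) = r := idx_ext_iff.2 ⟨hr.symm, rfl⟩
    rw [Finset.sum_eq_single r.1.2]
    · rw [dif_pos hlt, if_pos hEq]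
    · intro b _ hb
      by_cases hb' : b < p₀.1.2
      · rw [dif_pos hb', if_neg]
        intro hEq
        exact hb (congrArg (fun x : Idx n => x.1.2) hEq)
      · rw [dif_neg hb']
    · intro h; exact absurd (Finset.mem_univ _) h
  · rw [if_neg hr]
    apply Finset.sum_eq_zero
    intro b _
    by_cases hb' : b < p₀.1.2
    · rw [dif_pos hb', if_neg]
      intro hEq
      exact hr ((idx_ext_iff.1 hEq).1).symm
    · rw [dif_neg hb']

lemma gvec_hyper (vmin : Fin n) (p₀ : Idx n) (hp₀ : vmin < p₀.1.2) (q : Idx n) :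
    Gvec vmin p₀ hp₀ q p₀ +
      (∑ w : Fin n, if h : w < p₀.1.2 then Gvec vmin p₀ hp₀ q ⟨(p₀.1.2, w), h⟩ else 0) = 1 := by
  by_cases hB : q.1.1 = p₀.1.2 ∨ q = p₀
  · have ha : auxEdge vmin p₀ hp₀ q = q := auxEdge_of_B vmin p₀ hp₀ q hB
    have hG : ∀ p : Idx n, Gvec vmin p₀ hp₀ q p = if p = q then (1 : ℝ) else 0 := by
      intro p; simp only [Gvec, ha, or_self]
    simp only [hG]
    rw [sum_indicator]
    rcases hB with h | h
    · rw [if_neg, if_pos h]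
      · norm_num
      · intro hEq
        have h2 := (idx_ext_iff.1 hEq).1
        rw [h] at h2
        exact absurd rfl (ne_of_gt (h2 ▸ p₀.2))
    · rw [if_pos h.symm, if_neg]
      · norm_num
      · rw [h]; exact ne_of_gt p₀.2
  · have hne : q ≠ auxEdge vmin p₀ hp₀ q := by
      intro h
      apply hB
      have := auxEdge_B vmin p₀ hp₀ q
      rwa [← h] at this
    have hG : ∀ p : Idx n, Gvec vmin p₀ hp₀ q p =
        (if p = q then (1 : ℝ) else 0) + (if p = auxEdge vmin p₀ hp₀ q then 1 else 0) := by
      intro p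
      unfold Gvec
      by_cases h1 : p = q <;> by_cases h2 : p = auxEdge vmin p₀ hp₀ q
      · exact absurd (h1.symm.trans h2) hne
      · rw [if_pos (Or.inl h1), if_pos h1, if_neg h2]; norm_num
      · rw [if_pos (Or.inr h2), if_neg h1, if_pos h2]; norm_num
      · rw [if_neg (by tauto), if_neg h1, if_neg h2]; norm_num
    simp only [hG]
    have hsplit : (∑ w : Fin n, if h : w < p₀.1.2 then
        ((if (⟨(p₀.1.2, w), h⟩ : Idx n) = q then (1 : ℝ) else 0) +
         (if (⟨(p₀.1.2, w), h⟩ : Idx n) = auxEdge vmin p₀ hp₀ q then 1 else 0)) else 0) =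
        (∑ w : Fin n, if h : w < p₀.1.2 then
          (if (⟨(p₀.1.2, w), h⟩ : Idx n) = q then (1 : ℝ) else 0) else 0) +
        (∑ w : Fin n, if h : w < p₀.1.2 then
          (if (⟨(p₀.1.2, w), h⟩ : Idx n) = auxEdge vmin p₀ hp₀ q then (1 : ℝ) else 0) else 0) := by
      rw [← Finset.sum_add_distrib]
      apply Finset.sum_congr rfl
      intro b _
      by_cases hb : b < p₀.1.2 <;> simp [hb]
    rw [hsplit, sum_indicator, sum_indicator]
    have h1 : ¬(p₀ = q) := fun h => hB (Or.inr h.symm)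
    have h2 : ¬(q.1.1 = p₀.1.2) := fun h => hB (Or.inl h)
    rcases auxEdge_B vmin p₀ hp₀ q with h3 | h3
    · have h4 : ¬(p₀ = auxEdge vmin p₀ hp₀ q) := by
        intro h
        have h5 := (idx_ext_iff.1 h).1
        rw [h3] at h5
        exact absurd rfl (ne_of_gt (h5 ▸ p₀.2))
      rw [if_neg h1, if_neg h4, if_neg h2, if_pos h3]
      norm_num
    · have h4 : ¬((auxEdge vmin p₀ hp₀ q).1.1 = p₀.1.2) := by
        rw [h3]; exact ne_of_gt p₀.2
      rw [if_neg h1, if_pos h3.symm, if_neg h2, if_neg h4]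
      norm_num

lemma valid (p₀ : Idx n) (f : Idx n → ℝ) (hf : IsStarPartition f) :
    f p₀ + (∑ w : Fin n, if h : w < p₀.1.2 then f ⟨(p₀.1.2, w), h⟩ else 0) ≤ 1 := by
  obtain ⟨h01, k, U, u, hdisj, hmem, hmin, hiff⟩ := hf
  have excl1 : f p₀ = 1 → ∀ (w : Fin n) (h : w < p₀.1.2), f ⟨(p₀.1.2, w), h⟩ = 0 := by
    intro hp w h
    rcases h01 ⟨(p₀.1.2, w), h⟩ with h0 | h1
    · exact h0
    exfalso
    obtain ⟨s, hs1, hs2, hs3⟩ := (hiff p₀).1 hp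
    obtain ⟨t, ht1, ht2, ht3⟩ := (hiff ⟨(p₀.1.2, w), h⟩).1 h1
    simp only at ht1 ht2 ht3
    by_cases hst : s = t
    · subst hst
      exact ht3 (hs1 ▸ rfl)
    · have hv : p₀.1.2 ∈ U s := hs1 ▸ hmem s
      exact Finset.disjoint_left.1 (hdisj s t hst) hv ht2
  have excl2 : ∀ (w w' : Fin n) (h : w < p₀.1.2) (h' : w' < p₀.1.2),
      f ⟨(p₀.1.2, w), h⟩ = 1 → f ⟨(p₀.1.2, w'), h'⟩ = 1 → w = w' := by
    intro w w' h h' hw hw'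
    obtain ⟨s, hs1, hs2, hs3⟩ := (hiff ⟨(p₀.1.2, w), h⟩).1 hw
    obtain ⟨t, ht1, ht2, ht3⟩ := (hiff ⟨(p₀.1.2, w'), h'⟩).1 hw'
    simp only at hs1 hs2 hs3 ht1 ht2 ht3
    by_cases hst : s = t
    · subst hst; exact hs1.trans ht1.symm
    · exact absurd ht2 (Finset.disjoint_left.1 (hdisj s t hst) hs2)
  by_cases hp : f p₀ = 1
  · rw [hp]
    have hz : (∑ w : Fin n, if h : w < p₀.1.2 then f ⟨(p₀.1.2, w), h⟩ else 0) = 0 := by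
      apply Finset.sum_eq_zero
      intro w _
      by_cases h : w < p₀.1.2
      · rw [dif_pos h, excl1 hp w h]
      · rw [dif_neg h]
    rw [hz]; norm_num
  · have hp0 : f p₀ = 0 := (h01 p₀).resolve_right hp
    rw [hp0, zero_add]
    by_cases hex : ∃ (w : Fin n) (h : w < p₀.1.2), f ⟨(p₀.1.2, w), h⟩ = 1
    · obtain ⟨w₀, h₀, hw₀⟩ := hex
      rw [Finset.sum_eq_single w₀]
      · rw [dif_pos h₀, hw₀]
      · intro b _ hb
        by_cases hb' : b < p₀.1.2
        · rw [dif_pos hb']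
          rcases h01 ⟨(p₀.1.2, b), hb'⟩ with h0 | h1
          · exact h0
          · exact absurd (excl2 b w₀ hb' h₀ h1 hw₀) hb
        · rw [dif_neg hb']
      · intro h; exact absurd (Finset.mem_univ _) h
    · have hz : (∑ w : Fin n, if h : w < p₀.1.2 then f ⟨(p₀.1.2, w), h⟩ else 0) = 0 := by
        apply Finset.sum_eq_zero
        intro w _
        by_cases h : w < p₀.1.2
        · rw [dif_pos h]
          rcases h01 ⟨(p₀.1.2, w), h⟩ with h0 | h1
          · exact h0
          · exact absurd ⟨w, h, h1⟩ hex
        · rw [dif_neg h]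
      rw [hz]; norm_num

lemma gvec_affineIndependent (vmin : Fin n) (p₀ : Idx n) (hp₀ : vmin < p₀.1.2) :
    AffineIndependent ℝ (Gvec vmin p₀ hp₀) := by
  rw [affineIndependent_iff]
  intro s w hw hsum
  set W : Idx n → ℝ := fun q => if q ∈ s then w q else 0 with hWdef
  have hWsum : ∑ q : Idx n, W q • Gvec vmin p₀ hp₀ q = 0 := by
    have : ∑ q : Idx n, W q • Gvec vmin p₀ hp₀ q
        = ∑ q ∈ s, w q • Gvec vmin p₀ hp₀ q := by
      rw [← Finset.sum_subset (Finset.subset_univ s)]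
      · apply Finset.sum_congr rfl
        intro q hq
        rw [hWdef]; simp [hq]
      · intro q _ hq
        rw [hWdef]; simp [hq]
    rw [this, hsum]
  have hval : ∀ p : Idx n, ∑ q : Idx n, W q * Gvec vmin p₀ hp₀ q p = 0 := by
    intro p
    have := congrFun hWsum p
    simpa [Finset.sum_apply] using this
  have step1 : ∀ p : Idx n, ¬(p.1.1 = p₀.1.2 ∨ p = p₀) → W p = 0 := by
    intro p hp
    have h := hval p
    rw [Finset.sum_eq_single p] at h
    · simpa [Gvec] using h
    · intro q _ hqp
      have hz : Gvec vmin p₀ hp₀ q p = 0 := by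
        unfold Gvec
        rw [if_neg]
        rintro (h1 | h2)
        · exact hqp h1.symm
        · apply hp
          have := auxEdge_B vmin p₀ hp₀ q
          rwa [← h2] at this
      rw [hz, mul_zero]
    · intro h; exact absurd (Finset.mem_univ _) h
  have step2 : ∀ p : Idx n, W p = 0 := by
    intro p
    have h := hval p
    rw [Finset.sum_eq_single p] at h
    · simpa [Gvec] using h
    · intro q _ hqp
      by_cases hpa : p = auxEdge vmin p₀ hp₀ q
      · have hqB : ¬(q.1.1 = p₀.1.2 ∨ q = p₀) := by
          intro hBq
          rw [auxEdge_of_B vmin p₀ hp₀ q hBq] at hpa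
          exact hqp hpa.symm
        rw [step1 q hqB, zero_mul]
      · have hz : Gvec vmin p₀ hp₀ q p = 0 := by
          unfold Gvec
          rw [if_neg]
          rintro (h1 | h2)
          · exact hqp h1.symm
          · exact hpa h2
        rw [hz, mul_zero]
    · intro h; exact absurd (Finset.mem_univ _) h
  intro q hq
  have := step2 q
  rw [hWdef] at this
  simpa [hq] using this

lemma card_idx : Fintype.card (Idx n) = n * (n - 1) / 2 := by
  have e : Idx n ≃ Σ i : Fin n, Fin i.val :=
    { toFun := fun q => ⟨q.1.1, ⟨q.1.2.val, q.2⟩⟩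
      invFun := fun s => ⟨(s.1, ⟨s.2.val, lt_trans s.2.isLt s.1.isLt⟩), s.2.isLt⟩
      left_inv := fun q => rfl
      right_inv := fun s => rfl }
  rw [Fintype.card_congr e, Fintype.card_sigma]
  simp only [Fintype.card_fin]
  rw [show (∑ x : Fin n, (x : ℕ)) = ∑ i ∈ Finset.range n, i from
    Fin.sum_univ_eq_sum_range (fun i => i) n, Finset.sum_range_id]

end StarPartitionFacetAux

open StarPartitionFacetAux in
/-- for `n ≥ 3` and `(u₀, v₀) ∈ I` with `v₀` above the smallest element of `Fin n`,
the inequality `f(u₀,v₀) + ∑_{w < v₀} f(v₀,w) ≤ 1` is valid for all star-partition vectors, and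
there are `n(n−1)/2` affinely independent star-partition vectors satisfying it with equality
(so it is facet defining for the `n(n−1)/2`-dimensional star-partition polytope). -/
theorem starPartition_facet_structured (n : ℕ) (hn : 3 ≤ n)
    (vmin : Fin n) (hmin : ∀ v, vmin ≤ v)
    (p₀ : Idx n) (hp₀ : vmin < p₀.1.2) :
    (∀ f : Idx n → ℝ, IsStarPartition f →
      f p₀ + (∑ w : Fin n, if h : w < p₀.1.2 then f ⟨(p₀.1.2, w), h⟩ else 0) ≤ 1) ∧
    ∃ F : Fin (n * (n - 1) / 2) → (Idx n → ℝ),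
      AffineIndependent ℝ F ∧
      ∀ i, IsStarPartition (F i) ∧
        F i p₀ + (∑ w : Fin n, if h : w < p₀.1.2 then F i ⟨(p₀.1.2, w), h⟩ else 0) = 1 := by
  constructor
  · intro f hf
    exact valid p₀ f hf
  · have hcard : Fintype.card (Fin (n * (n - 1) / 2)) = Fintype.card (Idx n) := by
      rw [Fintype.card_fin, card_idx]
    let e := Fintype.equivOfCardEq hcard
    refine ⟨Gvec vmin p₀ hp₀ ∘ e, ?_, ?_⟩
    · exact (gvec_affineIndependent vmin p₀ hp₀).comp_embedding e.toEmbedding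
    · intro i
      exact ⟨gvec_isSP vmin p₀ hp₀ (e i), gvec_hyper vmin p₀ hp₀ (e i)⟩
end

section
/- Assume n ≥ 2 and let v_max denote the largest element of Fin n. Then: (i) every vector f that specifies a star partition satisfies ∑_{v < v_max} f(v_max, v) ≤ 1; and (ii) there exists an affinely independent family of n(n−1)/2 vectors, each specifying a star partition and each satisfying ∑_{v < v_max} f(v_max, v) = 1 (so the inequality is facet defining for the convex hull of the star-partition vectors, which has dimension n(n−1)/2). -/
/-- An equivalence between the index set and a sigma type, to compute its cardinality. -/
def idxEquivSigma (n : ℕ) : Idx n ≃ Σ u : Fin n, Fin u.val where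
  toFun p := ⟨p.1.1, ⟨p.1.2.val, p.2⟩⟩
  invFun q := ⟨(q.1, ⟨q.2.val, q.2.isLt.trans q.1.isLt⟩), q.2.isLt⟩
  left_inv _ := rfl
  right_inv _ := rfl

theorem card_idx (n : ℕ) : Fintype.card (Idx n) = n * (n - 1) / 2 := by
  rw [Fintype.card_congr (idxEquivSigma n), Fintype.card_sigma]
  simp only [Fintype.card_fin]
  rw [Fin.sum_univ_eq_sum_range (fun i => i) n, Finset.sum_range_id]

theorem idx_ext {n : ℕ} {p q : Idx n} (h1 : p.1.1 = q.1.1) (h2 : p.1.2 = q.1.2) : p = q :=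
  Subtype.ext (Prod.ext h1 h2)

/-- for `n ≥ 2` and `v_max` the largest element of `Fin n`, the inequality
`∑_{v < v_max} f(v_max, v) ≤ 1` is valid for all star-partition vectors, and there are
`n(n−1)/2` affinely independent star-partition vectors satisfying it with equality
(so it is facet defining for the `n(n−1)/2`-dimensional star-partition polytope). -/
theorem starPartition_facet_vmax (n : ℕ) (hn : 2 ≤ n)
    (vmax : Fin n) (hmax : ∀ v, v ≤ vmax) :
    (∀ f : Idx n → ℝ, IsStarPartition f →
      (∑ v : Fin n, if h : v < vmax then f ⟨(vmax, v), h⟩ else 0) ≤ 1) ∧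
    ∃ F : Fin (n * (n - 1) / 2) → (Idx n → ℝ),
      AffineIndependent ℝ F ∧
      ∀ i, IsStarPartition (F i) ∧
        (∑ v : Fin n, if h : v < vmax then F i ⟨(vmax, v), h⟩ else 0) = 1 := by
  constructor
  · -- validity
    rintro f ⟨h01, k, U, u, hdisj, hmem, hmin, hiff⟩
    by_cases hex : ∃ v : Fin n, ∃ h : v < vmax, f ⟨(vmax, v), h⟩ = 1
    · obtain ⟨v0, hv0, hf0⟩ := hex
      obtain ⟨s0, hs0v, hs0m, hs0ne⟩ := (hiff _).1 hf0
      calc (∑ v : Fin n, if h : v < vmax then f ⟨(vmax, v), h⟩ else 0)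
          ≤ ∑ v : Fin n, if v = v0 then (1:ℝ) else 0 := by
            apply Finset.sum_le_sum
            intro v _
            by_cases hv : v = v0
            · subst hv
              simp [hv0, hf0]
            · rw [if_neg hv]
              split
              · rename_i h
                rcases h01 ⟨(vmax, v), h⟩ with h0 | h1
                · exact le_of_eq h0
                · exfalso
                  obtain ⟨s, hsv, hsm, hsne⟩ := (hiff _).1 h1
                  have hss : s = s0 := by
                    by_contra hne
                    exact (Finset.disjoint_left.1 (hdisj s s0 hne) hsm) hs0m
                  exact hv (by simp only at hsv hs0v; rw [hsv, hss, ← hs0v])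
              · exact le_refl 0
          _ = 1 := by simp
    · push_neg at hex
      have hz : (∑ v : Fin n, if h : v < vmax then f ⟨(vmax, v), h⟩ else 0) = 0 := by
        apply Finset.sum_eq_zero
        intro v _
        split
        · rename_i h
          rcases h01 ⟨(vmax, v), h⟩ with h0 | h1
          · exact h0
          · exact absurd h1 (hex v h)
        · rfl
      rw [hz]; exact zero_le_one
  · -- the affinely independent family
    set G : Idx n → Idx n → ℝ := fun e p =>
      if (p = e ∨ (e.1.1 ≠ vmax ∧ p.1.1 = vmax ∧ p.1.2 = e.1.2)) then 1 else 0 with hG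
    have hGdef : ∀ e p : Idx n, G e p =
        if (p = e ∨ (e.1.1 ≠ vmax ∧ p.1.1 = vmax ∧ p.1.2 = e.1.2)) then (1:ℝ) else 0 :=
      fun _ _ => rfl
    -- each G e is a star partition
    have hGsp : ∀ e, IsStarPartition (G e) := by
      intro e
      have hlt : e.1.2 < vmax := lt_of_lt_of_le e.2 (hmax e.1.1)
      refine ⟨fun p => by rw [hGdef]; split
                          · exact Or.inr rfl
                          · exact Or.inl rfl, 1,
        fun _ => insert e.1.1 {e.1.2, vmax},
        fun _ => e.1.2, fun s t hst => absurd (Subsingleton.elim s t) hst,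
        fun s => by simp, ?_, ?_⟩
      · intro s w hw hne
        simp only [Finset.mem_insert, Finset.mem_singleton] at hw
        rcases hw with h | h | h
        · rw [h]; exact e.2
        · exact absurd h hne
        · rw [h]; exact hlt
      · intro p
        have hcond : (p = e ∨ (e.1.1 ≠ vmax ∧ p.1.1 = vmax ∧ p.1.2 = e.1.2)) ↔
            (p.1.2 = e.1.2 ∧ p.1.1 ∈ insert e.1.1 ({e.1.2, vmax} : Finset (Fin n)) ∧
              p.1.1 ≠ e.1.2) := by
          constructor
          · rintro (rfl | ⟨hne, h1, h2⟩)
            · exact ⟨rfl, by simp, ne_of_gt p.2⟩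
            · exact ⟨h2, by simp [h1], by rw [h1]; exact ne_of_gt hlt⟩
          · rintro ⟨h2, h1, hne⟩
            simp only [Finset.mem_insert, Finset.mem_singleton] at h1
            rcases h1 with h1 | h1 | h1
            · exact Or.inl (idx_ext h1 h2)
            · exact absurd h1 hne
            · by_cases hev : e.1.1 = vmax
              · exact Or.inl (idx_ext (h1.trans hev.symm) h2)
              · exact Or.inr ⟨hev, h1, h2⟩
        rw [hGdef]
        constructor
        · intro h
          by_cases hc : (p = e ∨ (e.1.1 ≠ vmax ∧ p.1.1 = vmax ∧ p.1.2 = e.1.2))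
          · exact ⟨0, (hcond.1 hc).1, (hcond.1 hc).2.1, (hcond.1 hc).2.2⟩
          · rw [if_neg hc] at h; exact absurd h zero_ne_one
        · rintro ⟨s, h2, h1, hne⟩
          rw [if_pos (hcond.2 ⟨h2, h1, hne⟩)]
    -- each G e satisfies the equality
    have hGsum : ∀ e, (∑ v : Fin n, if h : v < vmax then G e ⟨(vmax, v), h⟩ else 0) = 1 := by
      intro e
      have hlt : e.1.2 < vmax := lt_of_lt_of_le e.2 (hmax e.1.1)
      rw [Finset.sum_eq_single_of_mem e.1.2 (Finset.mem_univ _)]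
      · rw [dif_pos hlt, hGdef, if_pos]
        by_cases hev : e.1.1 = vmax
        · exact Or.inl (idx_ext hev.symm rfl)
        · exact Or.inr ⟨hev, rfl, rfl⟩
      · intro v _ hv
        split
        · rw [hGdef, if_neg]
          rintro (he | ⟨-, -, h2⟩)
          · exact hv (congrArg (fun q : Idx n => q.1.2) he)
          · exact hv h2
        · rfl
    -- G is affinely independent
    have hAI : AffineIndependent ℝ G := by
      rw [affineIndependent_iff]
      intro s w hw0 hsum e he
      have heval : ∀ p : Idx n, (∑ e' ∈ s, w e' * G e' p) = 0 := by
        intro p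
        have h := congrFun hsum p
        simpa [Finset.sum_apply] using h
      have keyA : ∀ e' ∈ s, e'.1.1 ≠ vmax → w e' = 0 := by
        intro e' he' hne
        have h := heval e'
        rw [Finset.sum_eq_single_of_mem e' he'] at h
        · rw [hGdef, if_pos (Or.inl rfl), mul_one] at h
          exact h
        · intro b _ hb
          rw [hGdef, if_neg, mul_zero]
          rintro (hbe | ⟨-, h1, -⟩)
          · exact hb hbe.symm
          · exact hne h1
      by_cases hev : e.1.1 = vmax
      · have h := heval e
        rw [Finset.sum_eq_single_of_mem e he] at h
        · rw [hGdef, if_pos (Or.inl rfl), mul_one] at h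
          exact h
        · intro b hb hbe
          by_cases hbv : b.1.1 = vmax
          · rw [hGdef, if_neg, mul_zero]
            rintro (h1 | ⟨hbv', -, -⟩)
            · exact hbe h1.symm
            · exact hbv' hbv
          · rw [keyA b hb hbv, zero_mul]
      · exact keyA e he hev
    -- transport along the cardinality equivalence
    obtain ⟨eq⟩ : Nonempty (Fin (n * (n - 1) / 2) ≃ Idx n) :=
      ⟨(Fintype.equivFinOfCardEq (card_idx n)).symm⟩
    exact ⟨G ∘ eq, (affineIndependent_equiv eq).2 hAI, fun i => ⟨hGsp _, hGsum _⟩⟩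
end

section
/- Let λ ≥ 2 be an integer and let U ⊆ Fin n be a subset with |U| = λ + 1. Then every vector f that specifies a λ-bounded star partition satisfies ∑_{(u,v) ∈ I, u ∈ U, v ∈ U} f(u, v) ≤ λ − 1. -/
/-- `f : Idx n → ℝ` specifies a `λ`-bounded star partition: it is 0/1-valued and there are
pairwise disjoint subsets `U 1, …, U k` of `Fin n`, each of size at most `λ`, with centers
`u s ∈ U s` that are minimal in their star, such that `f (u, v) = 1` exactly when `v = u s`
and `u ∈ U s \ {u s}` for some `s`. -/
def IsBoundedStarPartition {n : ℕ} (lam : ℕ) (f : Idx n → ℝ) : Prop :=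
  (∀ p, f p = 0 ∨ f p = 1) ∧
  ∃ (k : ℕ) (U : Fin k → Finset (Fin n)) (u : Fin k → Fin n),
    (∀ s t, s ≠ t → Disjoint (U s) (U t)) ∧
    (∀ s, u s ∈ U s) ∧
    (∀ s, ∀ w ∈ U s, w ≠ u s → u s < w) ∧
    (∀ s, (U s).card ≤ lam) ∧
    (∀ p : Idx n, f p = 1 ↔ ∃ s, p.1.2 = u s ∧ p.1.1 ∈ U s ∧ p.1.1 ≠ u s)

/-- for `λ ≥ 2` and `U ⊆ Fin n` with `|U| = λ + 1`, every `λ`-bounded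
star-partition vector `f` satisfies `∑_{(u,v) ∈ I, u ∈ U, v ∈ U} f(u,v) ≤ λ − 1`. -/
theorem boundedStarPartition_clique_inequality (n : ℕ) (hn : 2 ≤ n)
    (lam : ℕ) (hlam : 2 ≤ lam) (U : Finset (Fin n)) (hU : U.card = lam + 1)
    (f : Idx n → ℝ) (hf : IsBoundedStarPartition lam f) :
    (∑ p : Idx n, if p.1.1 ∈ U ∧ p.1.2 ∈ U then f p else 0) ≤ (lam : ℝ) - 1 := by
  classical
  obtain ⟨h01, k, Us, u, hdisj, hmemU, hmin, hcard, hiff⟩ := hf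
  set T : Finset (Idx n) :=
    Finset.univ.filter (fun p => p.1.1 ∈ U ∧ p.1.2 ∈ U ∧ f p = 1) with hTdef
  have hmemT : ∀ p : Idx n, p ∈ T ↔ p.1.1 ∈ U ∧ p.1.2 ∈ U ∧ f p = 1 := by
    intro p; simp [hTdef]
  have hsum : (∑ p : Idx n, if p.1.1 ∈ U ∧ p.1.2 ∈ U then f p else 0) = (T.card : ℝ) := by
    rw [hTdef, Finset.card_filter]
    push_cast
    apply Finset.sum_congr rfl
    intro p _
    rcases h01 p with h | h <;>
      by_cases hp : p.1.1 ∈ U ∧ p.1.2 ∈ U <;>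
      simp [hp, h]
  rw [hsum]
  have hTs : ∀ p ∈ T, ∃ s, p.1.2 = u s ∧ p.1.1 ∈ Us s ∧ p.1.1 ≠ u s := by
    intro p hp
    exact (hiff p).1 ((hmemT p).1 hp).2.2
  have hne_center : ∀ p ∈ T, ∀ t, p.1.1 ≠ u t := by
    intro p hp t hpt
    obtain ⟨s, _, hmem, hne⟩ := hTs p hp
    by_cases hst : s = t
    · exact hne (by rw [hpt, hst])
    · refine Finset.disjoint_left.mp (hdisj s t hst) hmem ?_
      rw [hpt]; exact hmemU t
  have hinj : ∀ p ∈ T, ∀ q ∈ T, p.1.1 = q.1.1 → p = q := by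
    intro p hp q hq h1
    obtain ⟨s, hps, hpm, _⟩ := hTs p hp
    obtain ⟨t, hqs, hqm, _⟩ := hTs q hq
    have hst : s = t := by
      by_contra hst
      refine Finset.disjoint_left.mp (hdisj s t hst) hpm ?_
      rw [h1]; exact hqm
    have h2 : p.1.2 = q.1.2 := by rw [hps, hqs, hst]
    exact Subtype.ext (Prod.ext h1 h2)
  have hcardT : T.card = (T.image (fun p => p.1.1)).card :=
    (Finset.card_image_of_injOn (fun p hp q hq h => hinj p hp q hq h)).symm
  have hbound : T.card + 1 ≤ lam := by
    rcases Finset.eq_empty_or_nonempty T with hTe | ⟨p0, hp0⟩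
    · rw [hTe]; simpa using hlam.trans' (by norm_num)
    obtain ⟨s0, hp0s, _, _⟩ := hTs p0 hp0
    by_cases hall : ∀ p ∈ T, p.1.2 = u s0
    · have hsub : T.image (fun p => p.1.1) ⊆ Us s0 \ {u s0} := by
        intro w hw
        obtain ⟨p, hp, rfl⟩ := Finset.mem_image.mp hw
        obtain ⟨s, hps, hpm, hpn⟩ := hTs p hp
        have hss : s = s0 := by
          by_contra h
          have huu : u s = u s0 := by rw [← hps, hall p hp]
          refine Finset.disjoint_left.mp (hdisj s s0 h) (hmemU s) ?_
          rw [huu]; exact hmemU s0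
        subst hss
        exact Finset.mem_sdiff.mpr ⟨hpm, by simpa using hpn⟩
      have h1 : T.card ≤ (Us s0 \ {u s0}).card := hcardT ▸ Finset.card_le_card hsub
      have h2 : (Us s0 \ {u s0}).card + 1 = (Us s0).card := by
        rw [Finset.sdiff_singleton_eq_erase, Finset.card_erase_of_mem (hmemU s0)]
        have : 1 ≤ (Us s0).card := Finset.card_pos.mpr ⟨u s0, hmemU s0⟩
        omega
      have h3 := hcard s0
      omega
    · push_neg at hall
      obtain ⟨p1, hp1, hp1ne⟩ := hall
      obtain ⟨s1, hp1s, _, _⟩ := hTs p1 hp1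
      have hsub : T.image (fun p => p.1.1) ⊆ U \ {p0.1.2, p1.1.2} := by
        intro w hw
        obtain ⟨p, hp, rfl⟩ := Finset.mem_image.mp hw
        refine Finset.mem_sdiff.mpr ⟨((hmemT p).1 hp).1, ?_⟩
        simp only [Finset.mem_insert, Finset.mem_singleton, not_or]
        constructor
        · rw [hp0s]; exact hne_center p hp s0
        · rw [hp1s]; exact hne_center p hp s1
      have hne01 : p0.1.2 ≠ p1.1.2 := by
        intro h
        exact hp1ne (by rw [← h, hp0s])
      have hpair : ({p0.1.2, p1.1.2} : Finset (Fin n)) ⊆ U := by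
        intro x hx
        simp only [Finset.mem_insert, Finset.mem_singleton] at hx
        rcases hx with rfl | rfl
        · exact ((hmemT p0).1 hp0).2.1
        · exact ((hmemT p1).1 hp1).2.1
      have hpcard : ({p0.1.2, p1.1.2} : Finset (Fin n)).card = 2 :=
        Finset.card_pair hne01
      have h1 : T.card ≤ (U \ {p0.1.2, p1.1.2}).card := hcardT ▸ Finset.card_le_card hsub
      have h2 : (U \ {p0.1.2, p1.1.2}).card = U.card - 2 := by
        rw [Finset.card_sdiff_of_subset hpair, hpcard]
      omega
  have : (T.card : ℝ) + 1 ≤ (lam : ℝ) := by exact_mod_cast hbound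
  linarith
end

section
/- Let λ ≥ 2 be an integer and let U ⊆ Fin n be a subset with |U| = λ + 1 such that there exist elements of Fin n strictly smaller than every element of U and strictly larger than every element of U. Let b : I → ℝ with b ≠ 0 and b₀ ∈ ℝ be such that ∑_{(u,v)∈I} b(u,v)·f(u,v) ≤ b₀ for every vector f specifying a λ-bounded star partition, and such that every vector f specifying a λ-bounded star partition with ∑_{(u,v) ∈ I, u ∈ U, v ∈ U} f(u,v) = λ − 1 satisfies ∑_{(u,v)∈I} b(u,v)·f(u,v) = b₀. Then there exists a real α > 0 such that b(u,v) = α whenever u ∈ U and v ∈ U, b(u,v) = 0 otherwise, and b₀ = α·(λ − 1). -/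
/-- single-star indicator function -/
def starF {n : ℕ} (S : Finset (Fin n)) (c : Fin n) (p : Idx n) : ℝ :=
  if p.1.2 = c ∧ p.1.1 ∈ S ∧ p.1.1 ≠ c then 1 else 0

/-- two-star indicator function -/
def starF₂ {n : ℕ} (S₁ : Finset (Fin n)) (c₁ : Fin n) (S₂ : Finset (Fin n)) (c₂ : Fin n)
    (p : Idx n) : ℝ :=
  if (p.1.2 = c₁ ∧ p.1.1 ∈ S₁ ∧ p.1.1 ≠ c₁) ∨ (p.1.2 = c₂ ∧ p.1.1 ∈ S₂ ∧ p.1.1 ≠ c₂)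
  then 1 else 0

lemma isBSP_zero {n : ℕ} (lam : ℕ) :
    IsBoundedStarPartition (n := n) lam (fun _ => 0) := by
  refine ⟨fun p => Or.inl rfl, 0, Fin.elim0, Fin.elim0, fun s => s.elim0, fun s => s.elim0,
    fun s => s.elim0, fun s => s.elim0, ?_⟩
  intro p
  constructor
  · intro h; norm_num at h
  · rintro ⟨s, -⟩; exact s.elim0

lemma isBSP_one {n : ℕ} (lam : ℕ) (S : Finset (Fin n)) (c : Fin n)
    (hc : c ∈ S) (hmin : ∀ w ∈ S, w ≠ c → c < w) (hcard : S.card ≤ lam) :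
    IsBoundedStarPartition lam (starF S c) := by
  refine ⟨?_, 1, fun _ => S, fun _ => c, ?_, fun _ => hc, fun _ => hmin, fun _ => hcard, ?_⟩
  · intro p; unfold starF; split <;> simp
  · intro s t hst; exact absurd (Subsingleton.elim s t) hst
  · intro p
    unfold starF
    split
    next h => exact iff_of_true rfl ⟨0, h⟩
    next h =>
      refine iff_of_false (by norm_num) ?_
      rintro ⟨s, hs⟩
      exact h hs

lemma isBSP_two {n : ℕ} (lam : ℕ) (S₁ : Finset (Fin n)) (c₁ : Fin n)
    (S₂ : Finset (Fin n)) (c₂ : Fin n)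
    (hd : Disjoint S₁ S₂)
    (hc₁ : c₁ ∈ S₁) (hmin₁ : ∀ w ∈ S₁, w ≠ c₁ → c₁ < w) (hcard₁ : S₁.card ≤ lam)
    (hc₂ : c₂ ∈ S₂) (hmin₂ : ∀ w ∈ S₂, w ≠ c₂ → c₂ < w) (hcard₂ : S₂.card ≤ lam) :
    IsBoundedStarPartition lam (starF₂ S₁ c₁ S₂ c₂) := by
  refine ⟨?_, 2, ![S₁, S₂], ![c₁, c₂], ?_, ?_, ?_, ?_, ?_⟩
  · intro p; unfold starF₂; split <;> simp
  · intro s t hst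
    fin_cases s <;> fin_cases t <;> simp_all [hd, hd.symm]
  · intro s; fin_cases s <;> simpa
  · intro s; fin_cases s <;> simpa
  · intro s; fin_cases s <;> simpa
  · intro p
    unfold starF₂
    split
    next h =>
      refine iff_of_true rfl ?_
      rcases h with h | h
      · exact ⟨0, by simpa using h⟩
      · exact ⟨1, by simpa using h⟩
    next h =>
      refine iff_of_false (by norm_num) ?_
      rintro ⟨s, hs⟩
      apply h
      fin_cases s
      · exact Or.inl (by simpa using hs)
      · exact Or.inr (by simpa using hs)

lemma starF₂_eq_add {n : ℕ} (S₁ : Finset (Fin n)) (c₁ : Fin n)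
    (S₂ : Finset (Fin n)) (c₂ : Fin n) (hd : Disjoint S₁ S₂) :
    starF₂ S₁ c₁ S₂ c₂ = starF S₁ c₁ + starF S₂ c₂ := by
  funext p
  have hnot : ¬((p.1.2 = c₁ ∧ p.1.1 ∈ S₁ ∧ p.1.1 ≠ c₁) ∧ (p.1.2 = c₂ ∧ p.1.1 ∈ S₂ ∧ p.1.1 ≠ c₂)) := by
    rintro ⟨⟨-, h1, -⟩, ⟨-, h2, -⟩⟩
    exact (Finset.disjoint_left.mp hd) h1 h2
  simp only [starF₂, starF, Pi.add_apply]
  by_cases h1 : p.1.2 = c₁ ∧ p.1.1 ∈ S₁ ∧ p.1.1 ≠ c₁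
  · by_cases h2 : p.1.2 = c₂ ∧ p.1.1 ∈ S₂ ∧ p.1.1 ≠ c₂
    · exact absurd ⟨h1, h2⟩ hnot
    · rw [if_pos (Or.inl h1), if_pos h1, if_neg h2, add_zero]
  · by_cases h2 : p.1.2 = c₂ ∧ p.1.1 ∈ S₂ ∧ p.1.1 ≠ c₂
    · rw [if_pos (Or.inr h2), if_neg h1, if_pos h2, zero_add]
    · rw [if_neg (by tauto), if_neg h1, if_neg h2, add_zero]

lemma sum_starF {n : ℕ} (g : Fin n × Fin n → ℝ) (S : Finset (Fin n)) (c : Fin n)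
    (hmin : ∀ w ∈ S, w ≠ c → c < w) :
    ∑ p : Idx n, g p.1 * starF S c p = ∑ x ∈ S.erase c, g (x, c) := by
  have h1 : ∀ p : Idx n, g p.1 * starF S c p
      = (fun q : Fin n × Fin n => if q.2 = c ∧ q.1 ∈ S ∧ q.1 ≠ c then g q else 0) p.1 := by
    intro p; simp only [starF, mul_ite, mul_one, mul_zero]
  rw [Finset.sum_congr rfl (fun p _ => h1 p)]
  rw [← Finset.sum_subtype (Finset.univ.filter (fun q : Fin n × Fin n => q.2 < q.1))
    (by intro q; simp) (fun q : Fin n × Fin n => if q.2 = c ∧ q.1 ∈ S ∧ q.1 ≠ c then g q else 0)]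
  rw [Finset.sum_filter]
  have h2 : ∀ q : Fin n × Fin n,
      (if q.2 < q.1 then (if q.2 = c ∧ q.1 ∈ S ∧ q.1 ≠ c then g q else 0) else 0)
      = if q.2 = c ∧ q.1 ∈ S ∧ q.1 ≠ c then g q else 0 := by
    intro q
    by_cases hq : q.2 = c ∧ q.1 ∈ S ∧ q.1 ≠ c
    · have : q.2 < q.1 := hq.1 ▸ hmin q.1 hq.2.1 hq.2.2
      rw [if_pos this]
    · simp [hq]
  rw [Finset.sum_congr rfl (fun q _ => h2 q)]
  rw [Fintype.sum_prod_type]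
  have h3 : ∀ x : Fin n, (∑ y : Fin n, if y = c ∧ x ∈ S ∧ x ≠ c then g (x, y) else 0)
      = if x ∈ S ∧ x ≠ c then g (x, c) else 0 := by
    intro x
    by_cases hx : x ∈ S ∧ x ≠ c
    · simp [hx]
    · simp [hx]
  rw [Finset.sum_congr rfl (fun x _ => h3 x), ← Finset.sum_filter]
  congr 1
  ext x
  simp [Finset.mem_erase, and_comm]

/-- extend `b` from `Idx n` to all pairs by zero -/
def extIdx {n : ℕ} (b : Idx n → ℝ) (q : Fin n × Fin n) : ℝ :=
  if h : q.2 < q.1 then b ⟨q, h⟩ else 0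

lemma extIdx_apply {n : ℕ} (b : Idx n → ℝ) (p : Idx n) : extIdx b p.1 = b p :=
  dif_pos p.2

lemma sum_b_starF {n : ℕ} (b : Idx n → ℝ) (S : Finset (Fin n)) (c : Fin n)
    (hmin : ∀ w ∈ S, w ≠ c → c < w) :
    ∑ p : Idx n, b p * starF S c p = ∑ x ∈ S.erase c, extIdx b (x, c) :=
  (Finset.sum_congr rfl fun p _ => by rw [← extIdx_apply b p]).trans
    (sum_starF (extIdx b) S c hmin)

lemma sum_face_starF {n : ℕ} (U S : Finset (Fin n)) (c : Fin n)
    (hmin : ∀ w ∈ S, w ≠ c → c < w) :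
    ∑ p : Idx n, (if p.1.1 ∈ U ∧ p.1.2 ∈ U then starF S c p else 0)
      = ∑ x ∈ S.erase c, (if x ∈ U ∧ c ∈ U then (1:ℝ) else 0) :=
  (Finset.sum_congr rfl (fun p _ => by rw [ite_mul, one_mul, zero_mul])).trans
    (sum_starF (fun q => if q.1 ∈ U ∧ q.2 ∈ U then (1:ℝ) else 0) S c hmin)

lemma sum_b_starF₂ {n : ℕ} (b : Idx n → ℝ) (S₁ : Finset (Fin n)) (c₁ : Fin n)
    (S₂ : Finset (Fin n)) (c₂ : Fin n) (hd : Disjoint S₁ S₂)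
    (hmin₁ : ∀ w ∈ S₁, w ≠ c₁ → c₁ < w) (hmin₂ : ∀ w ∈ S₂, w ≠ c₂ → c₂ < w) :
    ∑ p : Idx n, b p * starF₂ S₁ c₁ S₂ c₂ p
      = ∑ x ∈ S₁.erase c₁, extIdx b (x, c₁) + ∑ x ∈ S₂.erase c₂, extIdx b (x, c₂) := by
  rw [starF₂_eq_add _ _ _ _ hd]
  simp only [Pi.add_apply, mul_add, Finset.sum_add_distrib]
  rw [sum_b_starF b S₁ c₁ hmin₁, sum_b_starF b S₂ c₂ hmin₂]

lemma sum_face_starF₂ {n : ℕ} (U S₁ : Finset (Fin n)) (c₁ : Fin n)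
    (S₂ : Finset (Fin n)) (c₂ : Fin n) (hd : Disjoint S₁ S₂)
    (hmin₁ : ∀ w ∈ S₁, w ≠ c₁ → c₁ < w) (hmin₂ : ∀ w ∈ S₂, w ≠ c₂ → c₂ < w) :
    ∑ p : Idx n, (if p.1.1 ∈ U ∧ p.1.2 ∈ U then starF₂ S₁ c₁ S₂ c₂ p else 0)
      = ∑ x ∈ S₁.erase c₁, (if x ∈ U ∧ c₁ ∈ U then (1:ℝ) else 0)
        + ∑ x ∈ S₂.erase c₂, (if x ∈ U ∧ c₂ ∈ U then (1:ℝ) else 0) := by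
  rw [starF₂_eq_add _ _ _ _ hd]
  have h : ∀ p : Idx n, (if p.1.1 ∈ U ∧ p.1.2 ∈ U then (starF S₁ c₁ + starF S₂ c₂) p else 0)
      = (if p.1.1 ∈ U ∧ p.1.2 ∈ U then starF S₁ c₁ p else 0)
        + (if p.1.1 ∈ U ∧ p.1.2 ∈ U then starF S₂ c₂ p else 0) := by
    intro p; by_cases hp : p.1.1 ∈ U ∧ p.1.2 ∈ U <;> simp [hp]
  rw [Finset.sum_congr rfl fun p _ => h p, Finset.sum_add_distrib,
    sum_face_starF U S₁ c₁ hmin₁, sum_face_starF U S₂ c₂ hmin₂]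

/-- coefficient determination for the facet
`∑_{(u,v) ∈ I, u,v ∈ U} f(u,v) ≤ λ − 1`: if a nonzero valid inequality `⟨b, f⟩ ≤ b₀` for the
`λ`-bounded star-partition polytope is tight on the whole face cut out by this inequality,
then `b = α·𝟙_{U×U}` and `b₀ = α(λ−1)` for some `α > 0`. -/
theorem boundedStarPartition_facet_coefficients (n : ℕ) (hn : 2 ≤ n)
    (lam : ℕ) (hlam : 2 ≤ lam) (U : Finset (Fin n)) (hU : U.card = lam + 1)
    (hbelow : ∃ a : Fin n, ∀ u ∈ U, a < u)
    (habove : ∃ c : Fin n, ∀ u ∈ U, u < c)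
    (b : Idx n → ℝ) (hb : b ≠ 0) (b₀ : ℝ)
    (hvalid : ∀ f : Idx n → ℝ, IsBoundedStarPartition lam f →
      (∑ p : Idx n, b p * f p) ≤ b₀)
    (hface : ∀ f : Idx n → ℝ, IsBoundedStarPartition lam f →
      (∑ p : Idx n, if p.1.1 ∈ U ∧ p.1.2 ∈ U then f p else 0) = (lam : ℝ) - 1 →
      (∑ p : Idx n, b p * f p) = b₀) :
    ∃ α : ℝ, 0 < α ∧
      (∀ p : Idx n, (p.1.1 ∈ U ∧ p.1.2 ∈ U → b p = α) ∧
        (¬(p.1.1 ∈ U ∧ p.1.2 ∈ U) → b p = 0)) ∧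
      b₀ = α * ((lam : ℝ) - 1) := by
  classical
  have hUne : U.Nonempty := Finset.card_pos.mp (by omega)
  set m := U.min' hUne with hm
  have hmU : m ∈ U := U.min'_mem hUne
  have hminU : ∀ w ∈ U, w ≠ m → m < w := fun w hw hne =>
    lt_of_le_of_ne (U.min'_le w hw) (Ne.symm hne)
  set V := U.erase m with hV
  have hVcard : V.card = lam := by rw [hV, Finset.card_erase_of_mem hmU, hU]; omega
  -- Step 1 : single star on U.erase x, centered at m, for each x ∈ V
  have key1 : ∀ x ∈ V, ∑ y ∈ V.erase x, extIdx b (y, m) = b₀ := by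
    intro x hx
    obtain ⟨hxm, hxU⟩ := Finset.mem_erase.mp hx
    have hcS : (U.erase x).card = lam := by rw [Finset.card_erase_of_mem hxU, hU]; omega
    have hmS : m ∈ U.erase x := Finset.mem_erase.mpr ⟨fun h => hxm h.symm, hmU⟩
    have hminS : ∀ w ∈ U.erase x, w ≠ m → m < w := fun w hw =>
      hminU w (Finset.mem_of_mem_erase hw)
    have hbsp := isBSP_one lam (U.erase x) m hmS hminS (le_of_eq hcS)
    have hfs : ∑ p : Idx n, (if p.1.1 ∈ U ∧ p.1.2 ∈ U then starF (U.erase x) m p else 0)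
        = (lam : ℝ) - 1 := by
      rw [sum_face_starF U (U.erase x) m hminS]
      have hall : ∀ y ∈ (U.erase x).erase m, (if y ∈ U ∧ m ∈ U then (1:ℝ) else 0) = 1 := by
        intro y hy
        have : y ∈ U := Finset.mem_of_mem_erase (Finset.mem_of_mem_erase hy)
        simp [this, hmU]
      rw [Finset.sum_congr rfl hall, Finset.sum_const, Finset.card_erase_of_mem hmS, hcS,
        nsmul_eq_mul, mul_one, Nat.cast_sub (by omega), Nat.cast_one]
    have heq := hface _ hbsp hfs
    rw [sum_b_starF b (U.erase x) m hminS, Finset.erase_right_comm] at heq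
    exact heq
  -- Step 2 : the coefficient α
  set G := ∑ y ∈ V, extIdx b (y, m) with hG
  set α := G - b₀ with hα
  have key2 : ∀ x ∈ V, extIdx b (x, m) = α := by
    intro x hx
    have h := key1 x hx
    rw [Finset.sum_erase_eq_sub hx, ← hG] at h
    rw [hα]
    linarith
  -- Step 3 : b₀ = (lam - 1) α
  have hVne : V.Nonempty := Finset.card_pos.mp (by omega)
  obtain ⟨x₀, hx₀⟩ := hVne
  have hGval : G = (lam : ℝ) * α := by
    rw [hG, Finset.sum_congr rfl key2, Finset.sum_const, hVcard, nsmul_eq_mul]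
  have hb₀ : b₀ = ((lam : ℝ) - 1) * α := by
    have h := key1 x₀ hx₀
    rw [Finset.sum_erase_eq_sub hx₀, key2 x₀ hx₀, ← hG, hGval] at h
    linarith
  -- Step 4 : coefficients inside U × U all equal α
  have keyU : ∀ q : Fin n × Fin n, q.2 < q.1 → q.1 ∈ U → q.2 ∈ U → extIdx b q = α := by
    rintro ⟨x, v⟩ hlt hxU hvU
    dsimp only at hlt hxU hvU ⊢
    by_cases hvm : v = m
    · subst hvm
      exact key2 x (Finset.mem_erase.mpr ⟨hlt.ne', hxU⟩)
    · have hmv : m < v := hminU v hvU hvm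
      have hxU' : x ∈ U.erase v := Finset.mem_erase.mpr ⟨hlt.ne', hxU⟩
      set T := (U.erase v).erase x with hT
      have hmT : m ∈ T := by
        refine Finset.mem_erase.mpr ⟨(hmv.trans hlt).ne, Finset.mem_erase.mpr ⟨hmv.ne, hmU⟩⟩
      have hTcard : T.card = lam - 1 := by
        rw [hT, Finset.card_erase_of_mem hxU', Finset.card_erase_of_mem hvU, hU]; omega
      have hminT : ∀ w ∈ T, w ≠ m → m < w := fun w hw =>
        hminU w (Finset.mem_of_mem_erase (Finset.mem_of_mem_erase hw))
      have hdisj : Disjoint ({v, x} : Finset (Fin n)) T := by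
        rw [Finset.disjoint_left]
        intro a ha haT
        rcases Finset.mem_insert.mp ha with h | h
        · exact (Finset.mem_erase.mp (Finset.mem_of_mem_erase haT)).1 h
        · exact (Finset.mem_erase.mp haT).1 (Finset.mem_singleton.mp h)
      have hvS : v ∈ ({v, x} : Finset (Fin n)) := by simp
      have hminS₁ : ∀ w ∈ ({v, x} : Finset (Fin n)), w ≠ v → v < w := by
        intro w hw hne
        rcases Finset.mem_insert.mp hw with h | h
        · exact absurd h hne
        · rw [Finset.mem_singleton.mp h]; exact hlt
      have hcard₁ : ({v, x} : Finset (Fin n)).card ≤ lam := by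
        rw [Finset.card_pair hlt.ne]; exact hlam
      have hbsp := isBSP_two lam {v, x} v T m hdisj hvS hminS₁ hcard₁ hmT hminT (by omega)
      have herase : ({v, x} : Finset (Fin n)).erase v = {x} :=
        Finset.erase_insert (by simp [hlt.ne])
      have hfs : ∑ p : Idx n, (if p.1.1 ∈ U ∧ p.1.2 ∈ U then starF₂ {v, x} v T m p else 0)
          = (lam : ℝ) - 1 := by
        rw [sum_face_starF₂ U {v, x} v T m hdisj hminS₁ hminT, herase, Finset.sum_singleton,
          if_pos ⟨hxU, hvU⟩]
        have hall : ∀ y ∈ T.erase m, (if y ∈ U ∧ m ∈ U then (1:ℝ) else 0) = 1 := by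
          intro y hy
          have : y ∈ U := Finset.mem_of_mem_erase
            (Finset.mem_of_mem_erase (Finset.mem_of_mem_erase hy))
          simp [this, hmU]
        rw [Finset.sum_congr rfl hall, Finset.sum_const, Finset.card_erase_of_mem hmT, hTcard,
          nsmul_eq_mul, mul_one, Nat.cast_sub (by omega), Nat.cast_sub (by omega)]
        push_cast
        ring
      have heq := hface _ hbsp hfs
      rw [sum_b_starF₂ b {v, x} v T m hdisj hminS₁ hminT, herase, Finset.sum_singleton] at heq
      have hsum2 : ∑ y ∈ T.erase m, extIdx b (y, m) = ((lam : ℝ) - 2) * α := by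
        have hall : ∀ y ∈ T.erase m, extIdx b (y, m) = α := by
          intro y hy
          have hyU : y ∈ U := Finset.mem_of_mem_erase
            (Finset.mem_of_mem_erase (Finset.mem_of_mem_erase hy))
          exact key2 y (Finset.mem_erase.mpr ⟨(Finset.mem_erase.mp hy).1, hyU⟩)
        rw [Finset.sum_congr rfl hall, Finset.sum_const, Finset.card_erase_of_mem hmT, hTcard,
          nsmul_eq_mul, Nat.cast_sub (by omega), Nat.cast_sub (by omega)]
        push_cast
        ring
      rw [hsum2, hb₀] at heq
      linarith
  -- Step 5 : coefficients outside U × U vanish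
  have keyO : ∀ q : Fin n × Fin n, q.2 < q.1 → ¬(q.1 ∈ U ∧ q.2 ∈ U) → extIdx b q = 0 := by
    rintro ⟨x, v⟩ hlt hnot
    dsimp only at hlt hnot ⊢
    set w : Fin n := if x ∈ U then x else if v ∈ U then v else m with hw
    have hwU : w ∈ U := by
      rw [hw]; split_ifs with h1 h2
      exacts [h1, h2, hmU]
    set S := U.erase w with hS
    have hcS : S.card = lam := by rw [hS, Finset.card_erase_of_mem hwU, hU]; omega
    have hxS : x ∉ S := by
      rw [hS]
      intro hxs
      obtain ⟨hx1, hx2⟩ := Finset.mem_erase.mp hxs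
      exact hx1 (by rw [hw, if_pos hx2])
    have hvS : v ∉ S := by
      rw [hS]
      intro hvs
      obtain ⟨hv1, hv2⟩ := Finset.mem_erase.mp hvs
      by_cases hxU : x ∈ U
      · exact hnot ⟨hxU, hv2⟩
      · exact hv1 (by rw [hw, if_neg hxU, if_pos hv2])
    have hSne : S.Nonempty := Finset.card_pos.mp (by omega)
    set c := S.min' hSne with hc
    have hcS' : c ∈ S := S.min'_mem hSne
    have hminS : ∀ y ∈ S, y ≠ c → c < y := fun y hy hne =>
      lt_of_le_of_ne (S.min'_le y hy) (Ne.symm hne)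
    have hcU : c ∈ U := Finset.mem_of_mem_erase hcS'
    have hdisj : Disjoint S ({v, x} : Finset (Fin n)) := by
      rw [Finset.disjoint_right]
      intro a ha
      rcases Finset.mem_insert.mp ha with h | h
      · rw [h]; exact hvS
      · rw [Finset.mem_singleton.mp h]; exact hxS
    have hvS₂ : v ∈ ({v, x} : Finset (Fin n)) := by simp
    have hminS₂ : ∀ y ∈ ({v, x} : Finset (Fin n)), y ≠ v → v < y := by
      intro y hy hne
      rcases Finset.mem_insert.mp hy with h | h
      · exact absurd h hne
      · rw [Finset.mem_singleton.mp h]; exact hlt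
    have hcard₂ : ({v, x} : Finset (Fin n)).card ≤ lam := by
      rw [Finset.card_pair hlt.ne]; exact hlam
    have hbsp := isBSP_two lam S c {v, x} v hdisj hcS' hminS (le_of_eq hcS) hvS₂ hminS₂ hcard₂
    have herase : ({v, x} : Finset (Fin n)).erase v = {x} :=
      Finset.erase_insert (by simp [hlt.ne])
    have hfs : ∑ p : Idx n, (if p.1.1 ∈ U ∧ p.1.2 ∈ U then starF₂ S c {v, x} v p else 0)
        = (lam : ℝ) - 1 := by
      rw [sum_face_starF₂ U S c {v, x} v hdisj hminS hminS₂, herase, Finset.sum_singleton,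
        if_neg hnot, add_zero]
      have hall : ∀ y ∈ S.erase c, (if y ∈ U ∧ c ∈ U then (1:ℝ) else 0) = 1 := by
        intro y hy
        have : y ∈ U := Finset.mem_of_mem_erase (Finset.mem_of_mem_erase hy)
        simp [this, hcU]
      rw [Finset.sum_congr rfl hall, Finset.sum_const, Finset.card_erase_of_mem hcS', hcS,
        nsmul_eq_mul, mul_one, Nat.cast_sub (by omega), Nat.cast_one]
    have heq := hface _ hbsp hfs
    rw [sum_b_starF₂ b S c {v, x} v hdisj hminS hminS₂, herase, Finset.sum_singleton] at heq
    have hsum1 : ∑ y ∈ S.erase c, extIdx b (y, c) = ((lam : ℝ) - 1) * α := by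
      have hall : ∀ y ∈ S.erase c, extIdx b (y, c) = α := by
        intro y hy
        obtain ⟨hyc, hyS⟩ := Finset.mem_erase.mp hy
        exact keyU (y, c) (hminS y hyS hyc) (Finset.mem_of_mem_erase hyS) hcU
      rw [Finset.sum_congr rfl hall, Finset.sum_const, Finset.card_erase_of_mem hcS', hcS,
        nsmul_eq_mul, Nat.cast_sub (by omega), Nat.cast_one]
    rw [hsum1, hb₀] at heq
    linarith
  -- Step 6 : positivity
  have hαne : α ≠ 0 := by
    intro h0
    apply hb
    funext p
    show b p = 0
    by_cases hp : p.1.1 ∈ U ∧ p.1.2 ∈ U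
    · rw [← extIdx_apply b p, keyU p.1 p.2 hp.1 hp.2, h0]
    · rw [← extIdx_apply b p, keyO p.1 p.2 hp]
  have hαnonneg : 0 ≤ α := by
    have h := hvalid (fun _ => 0) (isBSP_zero lam)
    simp only [mul_zero, Finset.sum_const_zero] at h
    rw [hb₀] at h
    have hl : (1:ℝ) ≤ (lam : ℝ) - 1 := by
      have : (2:ℝ) ≤ (lam : ℝ) := by exact_mod_cast hlam
      linarith
    nlinarith
  have hαpos : 0 < α := lt_of_le_of_ne hαnonneg (Ne.symm hαne)
  refine ⟨α, hαpos, ?_, by rw [hb₀]; ring⟩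
  intro p
  constructor
  · intro hp; rw [← extIdx_apply b p]; exact keyU p.1 p.2 hp.1 hp.2
  · intro hp; rw [← extIdx_apply b p]; exact keyO p.1 p.2 hp
end

section
/- Let α ∈ ℝ^d, let β⁰, β¹ ∈ ℝ^m have all components nonnegative, and let γ⁰, γ¹ ≥ 0 be real numbers such that Ãᵀ β⁰ = α and Ãᵀ β¹ = α. Then every point (ω, f) of the convex hull of P′₀ ∪ P′₁ satisfies the disjunctive-cut inequality αᵀω + (β⁰ᵀb̃ − β¹ᵀb̃ + β¹ᵀp̃ + γ⁰ − γ¹)·f − β⁰ᵀb̃ + γ¹ ≥ 0. -/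
/-- validity of the disjunctive cut.  With
`P′₀ = {(ω, f) : Ã ω + f·p̃ ≥ b̃, f = 0}` and `P′₁ = {(ω, f) : Ã ω + f·p̃ ≥ b̃, f = 1}`,
if `Ãᵀ β⁰ = Ãᵀ β¹ = α` with `β⁰, β¹ ≥ 0` and `γ⁰, γ¹ ≥ 0`, then every point of
`conv(P′₀ ∪ P′₁)` satisfies
`αᵀω + (β⁰ᵀb̃ − β¹ᵀb̃ + β¹ᵀp̃ + γ⁰ − γ¹)·f − β⁰ᵀb̃ + γ¹ ≥ 0`. -/
theorem disjunctive_cut_valid (m d : ℕ) (hm : 0 < m) (hd : 0 < d)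
    (Atil : Matrix (Fin m) (Fin d) ℝ) (ptil btil : Fin m → ℝ)
    (α : Fin d → ℝ) (β0 β1 : Fin m → ℝ) (γ0 γ1 : ℝ)
    (hβ0 : ∀ i, 0 ≤ β0 i) (hβ1 : ∀ i, 0 ≤ β1 i) (hγ0 : 0 ≤ γ0) (hγ1 : 0 ≤ γ1)
    (h0 : Atil.transpose.mulVec β0 = α) (h1 : Atil.transpose.mulVec β1 = α)
    (q : (Fin d → ℝ) × ℝ)
    (hq : q ∈ convexHull ℝ
      ({ωf : (Fin d → ℝ) × ℝ |
          (∀ i, btil i ≤ Atil.mulVec ωf.1 i + ωf.2 * ptil i) ∧ ωf.2 = 0} ∪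
       {ωf : (Fin d → ℝ) × ℝ |
          (∀ i, btil i ≤ Atil.mulVec ωf.1 i + ωf.2 * ptil i) ∧ ωf.2 = 1})) :
    0 ≤ (∑ j, α j * q.1 j) +
        ((∑ i, β0 i * btil i) - (∑ i, β1 i * btil i) + (∑ i, β1 i * ptil i) + γ0 - γ1) * q.2
        - (∑ i, β0 i * btil i) + γ1 := by
  have key : ∀ (β : Fin m → ℝ) (ω : Fin d → ℝ),
      ∑ j, Atil.transpose.mulVec β j * ω j = ∑ i, β i * Atil.mulVec ω i := by
    intro β ω
    simp only [Matrix.mulVec, dotProduct, Matrix.transpose_apply, Finset.sum_mul,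
      Finset.mul_sum]
    rw [Finset.sum_comm]
    apply Finset.sum_congr rfl; intro i _
    apply Finset.sum_congr rfl; intro j _
    ring
  have hlin : IsLinearMap ℝ (fun w : (Fin d → ℝ) × ℝ => (∑ j, α j * w.1 j) + ((∑ i, β0 i * btil i) - (∑ i, β1 i * btil i) + (∑ i, β1 i * ptil i) + γ0 - γ1) * w.2) := by
    constructor
    · intro x y
      simp only [Prod.fst_add, Prod.snd_add, Pi.add_apply, mul_add, Finset.sum_add_distrib]
      ring
    · intro c x
      simp only [Prod.smul_fst, Prod.smul_snd, Pi.smul_apply, smul_eq_mul, mul_add,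
        Finset.mul_sum]
      congr 1
      · exact Finset.sum_congr rfl fun j _ => by ring
      · ring
  have hconv : Convex ℝ {w : (Fin d → ℝ) × ℝ |
      (∑ i, β0 i * btil i) - γ1 ≤ (∑ j, α j * w.1 j) + ((∑ i, β0 i * btil i) - (∑ i, β1 i * btil i) + (∑ i, β1 i * ptil i) + γ0 - γ1) * w.2} :=
    convex_halfSpace_ge hlin _
  have hsub : ({ωf : (Fin d → ℝ) × ℝ |
          (∀ i, btil i ≤ Atil.mulVec ωf.1 i + ωf.2 * ptil i) ∧ ωf.2 = 0} ∪
       {ωf : (Fin d → ℝ) × ℝ |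
          (∀ i, btil i ≤ Atil.mulVec ωf.1 i + ωf.2 * ptil i) ∧ ωf.2 = 1}) ⊆
      {w : (Fin d → ℝ) × ℝ |
        (∑ i, β0 i * btil i) - γ1 ≤ (∑ j, α j * w.1 j) + ((∑ i, β0 i * btil i) - (∑ i, β1 i * btil i) + (∑ i, β1 i * ptil i) + γ0 - γ1) * w.2} := by
    rintro ⟨ω, f⟩ (⟨hineq, hf⟩ | ⟨hineq, hf⟩) <;>
      simp only [Set.mem_setOf_eq] at *
    · subst hf
      have h0' : ∑ j, α j * ω j = ∑ i, β0 i * Atil.mulVec ω i := by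
        rw [← h0]; exact key β0 ω
      have hle : ∑ i, β0 i * btil i ≤ ∑ i, β0 i * Atil.mulVec ω i := by
        apply Finset.sum_le_sum
        intro i _
        have := hineq i
        simp only [zero_mul, add_zero] at this
        exact mul_le_mul_of_nonneg_left this (hβ0 i)
      simp only [mul_zero, add_zero]
      linarith
    · subst hf
      have h1' : ∑ j, α j * ω j = ∑ i, β1 i * Atil.mulVec ω i := by
        rw [← h1]; exact key β1 ω
      have hle : ∑ i, β1 i * btil i ≤ ∑ i, β1 i * (Atil.mulVec ω i + ptil i) := by
        apply Finset.sum_le_sum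
        intro i _
        have := hineq i
        simp only [one_mul] at this
        exact mul_le_mul_of_nonneg_left this (hβ1 i)
      simp only [mul_add, Finset.sum_add_distrib] at hle
      simp only [mul_one]
      linarith
  have hmem := convexHull_min hsub hconv hq
  simp only [Set.mem_setOf_eq] at hmem
  linarith
end
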